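/- arXiv:2603.23283 — 6 statements merged into one kernel-verified Lean document; each statement's English description precedes it below -/
import Mathlib

section
/- For every complex number s with -1 < Re s < 0, the integral ∫₀^∞ z^{s-1} Ξ(z) dz (with z^{s-1} = exp((s-1)·log z) for real z > 0) converges absolutely and equals -(π/2) · Γ(s+1) / sin(πs/2), where Γ is the complex Gamma function. -/
open MeasureTheory Set

noncomputable section

namespace SOSEX

/-- Spherical Bessel function of order one. -/
def j1 (z : ℝ) : ℝ := Real.sin z / z ^ 2 - Real.cos z / z

/-- `L(u) = log((u+1)/(u-1))`. -/
def Lfun (u : ℝ) : ℝ := Real.log ((u + 1) / (u - 1))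

/-- `ℓ(u,v) = -log(u·v)`. -/
def ell (u v : ℝ) : ℝ := -Real.log (u * v)

/-- The reduced geometric block `Φ(y)`. -/
def Phi (y : ℝ) : ℝ :=
  y * ∫ u in Ioi (1 : ℝ),
      Lfun u * ∫ v in Ioo (0 : ℝ) 1,
        ell u v * j1 ((u + v) * y / 2) * j1 ((u - v) * y / 2)

/-- The kernel `Ξ(z) = z ∫₀^∞ e^{-zt}/(1+t²) dt`. -/
def Xi (z : ℝ) : ℝ := z * ∫ t in Ioi (0 : ℝ), Real.exp (-z * t) / (1 + t ^ 2)

/-- `a₀ = 2 ∫₀^∞ j₁(t/2)²/t dt`. -/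
def a0 : ℝ := 2 * ∫ t in Ioi (0 : ℝ), (j1 (t / 2)) ^ 2 / t

/-- `b₀ = 2 ∫₀^∞ (j₁(t/2)²/t)(1 - log t) dt`. -/
def b0 : ℝ := 2 * ∫ t in Ioi (0 : ℝ), ((j1 (t / 2)) ^ 2 / t) * (1 - Real.log t)

/-- The Mellin kernel `𝒦(s) = -(π/2) Γ(s+1)/sin(πs/2)`. -/
def Kker (s : ℂ) : ℂ :=
  -((Real.pi : ℂ) / 2) * Complex.Gamma (s + 1) / Complex.sin ((Real.pi : ℂ) * s / 2)

end SOSEX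

/-!
`Ξ(z) = z · 𝓛g(z)` with `g t = (1 + t²)⁻¹`, and by Fubini together with
`∫₀^∞ z^{s-1} e^{-zt} dz = Γ(s) t^{-s}` the Mellin transform of a Laplace transform is
`𝓜(𝓛g)(s) = Γ(s) · 𝓜g(1 - s)`. So the integral is `Γ(s + 1) · 𝓜g(-s)`. The substitutions
`u = t²` and `u = x / (1 - x)` turn `𝓜g(-s)` into half the Beta integral `B(-s/2, 1 + s/2)`,
which Euler's reflection formula evaluates to `π / (2 sin(-πs/2))`.
-/

lemma ofReal_cpow_eq_exp_mul_log {r : ℝ} (hr : 0 < r) (c : ℂ) :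
    (r : ℂ) ^ c = Complex.exp (c * Real.log r) := by
  rw [Complex.cpow_def_of_ne_zero (by exact_mod_cast hr.ne'), Complex.ofReal_log hr.le, mul_comm]

lemma hasDerivAt_div_one_sub {x : ℝ} (hx : x ≠ 1) :
    HasDerivAt (fun y : ℝ => y / (1 - y)) ((1 - x) ^ 2)⁻¹ x := by
  have h : 1 - x ≠ 0 := sub_ne_zero.2 (Ne.symm hx)
  have hd := (hasDerivAt_id' x).fun_div ((hasDerivAt_id' x).const_sub 1) h
  rwa [show (1 * (1 - x) - x * -1) / (1 - x) ^ 2 = ((1 - x) ^ 2)⁻¹ by ring] at hd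

lemma injOn_div_one_sub : InjOn (fun x : ℝ => x / (1 - x)) (Ioo 0 1) := by
  intro x hx y hy hxy
  have hx' : 1 - x ≠ 0 := by linarith [hx.2]
  have hy' : 1 - y ≠ 0 := by linarith [hy.2]
  simp only [div_eq_div_iff hx' hy'] at hxy
  linarith

lemma image_div_one_sub_Ioo : (fun x : ℝ => x / (1 - x)) '' Ioo 0 1 = Ioi 0 := by
  ext u
  simp only [mem_image, mem_Ioo, mem_Ioi]
  constructor
  · rintro ⟨x, ⟨hx0, hx1⟩, rfl⟩
    exact div_pos hx0 (by linarith)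
  · intro hu
    refine ⟨u / (1 + u), ⟨by positivity, by rw [div_lt_one (by linarith)]; linarith⟩, ?_⟩
    have : 1 - u / (1 + u) = (1 + u)⁻¹ := by field_simp; ring
    rw [this, div_inv_eq_mul, div_mul_cancel₀ _ (by positivity)]

lemma abs_deriv_smul_mellin_inv_one_add {b : ℂ} {x : ℝ} (hx : x ∈ Ioo 0 1) :
    |((1 - x) ^ 2)⁻¹| • (((x / (1 - x) : ℝ) : ℂ) ^ (b - 1) • (1 + ((x / (1 - x) : ℝ) : ℂ))⁻¹) =
      (x : ℂ) ^ (b - 1) * (1 - (x : ℂ)) ^ ((1 - b) - 1) := by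
  obtain ⟨hx0, hx1⟩ := hx
  have h1x : 0 < 1 - x := by linarith
  have hone : (1 : ℂ) + ((x / (1 - x) : ℝ) : ℂ) = ((1 - x : ℝ) : ℂ)⁻¹ := by
    have : (1 : ℂ) - x ≠ 0 := by exact_mod_cast h1x.ne'
    push_cast
    field_simp
    ring
  rw [show (1 : ℂ) - x = ((1 - x : ℝ) : ℂ) by push_cast; ring, hone,
    abs_of_pos (by positivity), Complex.real_smul, smul_eq_mul,
    ofReal_cpow_eq_exp_mul_log (div_pos hx0 h1x), ofReal_cpow_eq_exp_mul_log hx0,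
    ofReal_cpow_eq_exp_mul_log h1x, Real.log_div hx0.ne' h1x.ne']
  have hexp : ((1 - x : ℝ) : ℂ) = Complex.exp (Real.log (1 - x)) := by
    rw [← Complex.ofReal_exp, Real.exp_log h1x]
  rw [inv_inv, Complex.ofReal_inv, Complex.ofReal_pow, hexp, ← Complex.exp_nat_mul,
    ← Complex.exp_neg, ← Complex.exp_add, ← Complex.exp_add, ← Complex.exp_add]
  congr 1
  push_cast
  ring

theorem hasMellin_inv_one_add {b : ℂ} (h0 : 0 < b.re) (h1 : b.re < 1) :
    HasMellin (fun u : ℝ => (1 + (u : ℂ))⁻¹) b (Real.pi / Complex.sin (Real.pi * b)) := by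
  have h1b : 0 < (1 - b).re := by simp only [Complex.sub_re, Complex.one_re]; linarith
  have hder : ∀ x ∈ Ioo (0 : ℝ) 1,
      HasDerivWithinAt (fun y : ℝ => y / (1 - y)) ((1 - x) ^ 2)⁻¹ (Ioo 0 1) x :=
    fun x hx => (hasDerivAt_div_one_sub hx.2.ne).hasDerivWithinAt
  have hbeta : IntegrableOn (fun x : ℝ => (x : ℂ) ^ (b - 1) * (1 - (x : ℂ)) ^ ((1 - b) - 1))
      (Ioo 0 1) :=
    ((intervalIntegrable_iff_integrableOn_Ioc_of_le zero_le_one).1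
      (Complex.betaIntegral_convergent h0 h1b)).mono_set Ioo_subset_Ioc_self
  refine ⟨?_, ?_⟩
  · rw [MellinConvergent, ← image_div_one_sub_Ioo,
      integrableOn_image_iff_integrableOn_abs_deriv_smul measurableSet_Ioo hder injOn_div_one_sub,
      integrableOn_congr_fun (fun x hx => abs_deriv_smul_mellin_inv_one_add hx) measurableSet_Ioo]
    exact hbeta
  · rw [mellin, ← image_div_one_sub_Ioo,
      integral_image_eq_integral_abs_deriv_smul measurableSet_Ioo hder injOn_div_one_sub,
      setIntegral_congr_fun measurableSet_Ioo (fun x hx => abs_deriv_smul_mellin_inv_one_add hx),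
      ← integral_Ioc_eq_integral_Ioo, ← intervalIntegral.integral_of_le zero_le_one,
      ← Complex.betaIntegral, ← Complex.Gamma_mul_Gamma_one_sub]
    have := Complex.Gamma_mul_Gamma_eq_betaIntegral h0 h1b
    rwa [add_sub_cancel, Complex.Gamma_one, one_mul, eq_comm] at this

theorem hasMellin_inv_one_add_sq {a : ℂ} (h0 : 0 < a.re) (h1 : a.re < 2) :
    HasMellin (fun t : ℝ => (1 + (t : ℂ) ^ 2)⁻¹) a
      (Real.pi / (2 * Complex.sin (Real.pi * a / 2))) := by
  have hsq : (fun t : ℝ => (1 + (t : ℂ) ^ 2)⁻¹) = fun t => (1 + ((t ^ (2 : ℝ) : ℝ) : ℂ))⁻¹ := by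
    ext t
    rw [Real.rpow_two]
    push_cast
    rfl
  have ha : a / ((2 : ℝ) : ℂ) = a / 2 := by norm_num
  obtain ⟨hconv, hval⟩ := hasMellin_inv_one_add (b := a / 2)
    (by simp only [Complex.div_ofNat_re]; linarith) (by simp only [Complex.div_ofNat_re]; linarith)
  refine ⟨?_, ?_⟩
  · rw [hsq]
    exact (MellinConvergent.comp_rpow two_ne_zero).2 (by rwa [ha])
  · rw [hsq, mellin_comp_rpow (fun u : ℝ => (1 + (u : ℂ))⁻¹), ha, hval, abs_two,
      Complex.real_smul, show (Real.pi : ℂ) * (a / 2) = Real.pi * a / 2 by ring]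
    push_cast
    ring

section Laplace

variable {E : Type*} [NormedAddCommGroup E] [NormedSpace ℂ E]

def laplace (g : ℝ → E) (z : ℝ) : E := ∫ t in Ioi 0, Real.exp (-z * t) • g t

lemma MellinConvergent.aestronglyMeasurable {f : ℝ → E} {s : ℂ} (hf : MellinConvergent f s) :
    AEStronglyMeasurable f (volume.restrict (Ioi 0)) := by
  have hcpow : ContinuousOn (fun t : ℝ => (t : ℂ) ^ (1 - s)) (Ioi 0) := fun t ht =>
    (Complex.continuousAt_ofReal_cpow_const t _ (Or.inr (ne_of_gt ht))).continuousWithinAt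
  refine ((hcpow.aestronglyMeasurable measurableSet_Ioi).smul
    (Integrable.aestronglyMeasurable hf)).congr ?_
  filter_upwards [ae_restrict_mem measurableSet_Ioi] with t ht
  rw [Pi.smul_apply', smul_smul, ← Complex.cpow_add _ _ (Complex.ofReal_ne_zero.2 (ne_of_gt ht))]
  simp

lemma norm_cpow_mul_exp_neg_mul {s : ℂ} {r z : ℝ} (hz : 0 < z) :
    ‖(z : ℂ) ^ (s - 1) * Complex.exp (-(r * z))‖ = z ^ (s.re - 1) * Real.exp (-(r * z)) := by
  rw [norm_mul, Complex.norm_cpow_eq_rpow_re_of_pos hz, ← Complex.ofReal_mul,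
    ← Complex.ofReal_neg, Complex.norm_exp_ofReal, Complex.sub_re, Complex.one_re]

lemma integrableOn_cpow_mul_exp_neg_mul {s : ℂ} (hs : 0 < s.re) {r : ℝ} (hr : 0 < r) :
    IntegrableOn (fun z : ℝ => (z : ℂ) ^ (s - 1) * Complex.exp (-(r * z))) (Ioi 0) := by
  refine Integrable.mono'
    (integrableOn_rpow_mul_exp_neg_mul_rpow (s := s.re - 1) (p := 1) (by linarith) one_pos hr) ?_ ?_
  · refine ContinuousOn.aestronglyMeasurable (fun z hz => ?_) measurableSet_Ioi
    exact ((Complex.continuousAt_ofReal_cpow_const z _ (Or.inr (ne_of_gt hz))).mul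
      (by fun_prop)).continuousWithinAt
  · filter_upwards [ae_restrict_mem measurableSet_Ioi] with z hz
    rw [norm_cpow_mul_exp_neg_mul hz, Real.rpow_one, neg_mul]

theorem hasMellin_laplace [CompleteSpace E] {g : ℝ → E} {s : ℂ} {m : E} (hs : 0 < s.re)
    (hg : HasMellin g (1 - s) m) : HasMellin (laplace g) s (Complex.Gamma s • m) := by
  set μ := volume.restrict (Ioi (0 : ℝ))
  set G : ℝ × ℝ → E := fun p => ((p.2 : ℂ) ^ (s - 1) * Complex.exp (-(p.1 * p.2))) • g p.1
  have hG_meas : AEStronglyMeasurable G (μ.prod μ) := by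
    refine AEStronglyMeasurable.smul ?_ hg.1.aestronglyMeasurable.comp_fst
    rw [Measure.prod_restrict]
    refine ContinuousOn.aestronglyMeasurable (fun p hp => ?_)
      (measurableSet_Ioi.prod measurableSet_Ioi)
    exact (((Complex.continuousAt_ofReal_cpow_const p.2 _ (Or.inr (ne_of_gt hp.2))).comp
      continuous_snd.continuousAt).mul (by fun_prop)).continuousWithinAt
  have h_slice : ∀ t ∈ Ioi (0 : ℝ), Integrable (fun z => G (t, z)) μ := fun t ht =>
    (integrableOn_cpow_mul_exp_neg_mul hs ht).smul_const (g t)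
  have h_norm : ∀ t ∈ Ioi (0 : ℝ),
      ∫ z, ‖G (t, z)‖ ∂μ = Real.Gamma s.re * ‖(t : ℂ) ^ ((1 - s) - 1) • g t‖ := by
    intro t ht
    calc ∫ z, ‖G (t, z)‖ ∂μ = ∫ z in Ioi 0, z ^ (s.re - 1) * Real.exp (-(t * z)) * ‖g t‖ :=
          setIntegral_congr_fun measurableSet_Ioi fun z hz => by
            rw [norm_smul, norm_cpow_mul_exp_neg_mul hz]
      _ = (1 / t) ^ s.re * Real.Gamma s.re * ‖g t‖ := by
          rw [integral_mul_const, Real.integral_rpow_mul_exp_neg_mul_Ioi hs ht]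
      _ = Real.Gamma s.re * ‖(t : ℂ) ^ ((1 - s) - 1) • g t‖ := by
          rw [norm_smul, Complex.norm_cpow_eq_rpow_re_of_pos ht, one_div, Real.inv_rpow ht.le,
            ← Real.rpow_neg ht.le, sub_sub_cancel_left, Complex.neg_re]
          ring
  have hG_int : Integrable G (μ.prod μ) := by
    refine (integrable_prod_iff hG_meas).2 ⟨?_, ?_⟩
    · exact (ae_restrict_mem measurableSet_Ioi).mono h_slice
    · refine (hg.1.norm.const_mul (Real.Gamma s.re)).congr ?_
      filter_upwards [ae_restrict_mem measurableSet_Ioi] with t ht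
      exact (h_norm t ht).symm
  have h_left : ∀ z ∈ Ioi (0 : ℝ), ∫ t, G (t, z) ∂μ = (z : ℂ) ^ (s - 1) • laplace g z := by
    intro z hz
    calc ∫ t, G (t, z) ∂μ = ∫ t in Ioi 0, (z : ℂ) ^ (s - 1) • Real.exp (-z * t) • g t := by
          congr 1 with t
          simp only [G]
          rw [mul_smul, neg_mul, mul_comm z t, ← Complex.ofReal_mul, ← Complex.ofReal_neg,
            ← Complex.ofReal_exp, Complex.coe_smul]
      _ = (z : ℂ) ^ (s - 1) • laplace g z := integral_smul _ _
  have h_right : ∀ t ∈ Ioi (0 : ℝ),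
      ∫ z, G (t, z) ∂μ = Complex.Gamma s • ((t : ℂ) ^ ((1 - s) - 1) • g t) := by
    intro t ht
    have harg : (t : ℂ).arg ≠ Real.pi := by
      rw [Complex.arg_ofReal_of_nonneg ht.le]
      exact Real.pi_pos.ne
    simp only [G]
    rw [integral_smul_const, Complex.integral_cpow_mul_exp_neg_mul_Ioi hs ht, smul_smul,
      one_div, Complex.inv_cpow _ _ harg, ← Complex.cpow_neg, sub_sub_cancel_left, mul_comm]
  refine ⟨?_, ?_⟩
  · refine hG_int.integral_prod_right.congr ?_
    filter_upwards [ae_restrict_mem measurableSet_Ioi] with z hz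
    exact h_left z hz
  · calc mellin (laplace g) s = ∫ z, ∫ t, G (t, z) ∂μ ∂μ :=
          setIntegral_congr_fun measurableSet_Ioi fun z hz => (h_left z hz).symm
      _ = ∫ t, ∫ z, G (t, z) ∂μ ∂μ := (integral_integral_swap hG_int).symm
      _ = ∫ t, Complex.Gamma s • ((t : ℂ) ^ ((1 - s) - 1) • g t) ∂μ :=
          setIntegral_congr_fun measurableSet_Ioi h_right
      _ = Complex.Gamma s • m := by rw [integral_smul, ← hg.2]; rfl

end Laplace

lemma Xi_eq_mul_laplace (z : ℝ) :
    (SOSEX.Xi z : ℂ) = z * laplace (fun t : ℝ => (1 + (t : ℂ) ^ 2)⁻¹) z := by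
  rw [SOSEX.Xi, laplace, Complex.ofReal_mul, ← integral_complex_ofReal]
  congr 2 with t
  rw [Complex.real_smul]
  push_cast
  ring

/-- For every complex `s` with `-1 < Re s < 0`, the integral
`∫₀^∞ z^{s-1} Ξ(z) dz` (with `z^{s-1} = exp((s-1)·log z)`) converges absolutely and equals
`-(π/2)·Γ(s+1)/sin(πs/2)`. -/
theorem stmt0 (s : ℂ) (hs1 : -1 < s.re) (hs2 : s.re < 0) :
    IntegrableOn
      (fun z : ℝ => Complex.exp ((s - 1) * (Real.log z : ℂ)) * (SOSEX.Xi z : ℂ))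
      (Ioi 0) volume ∧
    (∫ z in Ioi (0 : ℝ), Complex.exp ((s - 1) * (Real.log z : ℂ)) * (SOSEX.Xi z : ℂ)) =
      -((Real.pi : ℂ) / 2) * Complex.Gamma (s + 1) /
        Complex.sin ((Real.pi : ℂ) * s / 2) := by
  set L := laplace fun t : ℝ => (1 + (t : ℂ) ^ 2)⁻¹
  have hL : HasMellin L (s + 1)
      (Complex.Gamma (s + 1) • (Real.pi / (2 * Complex.sin (Real.pi * -s / 2)))) := by
    refine hasMellin_laplace (by simp only [Complex.add_re, Complex.one_re]; linarith) ?_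
    rw [show 1 - (s + 1) = -s by ring]
    exact hasMellin_inv_one_add_sq (by simpa using hs2) (by simp only [Complex.neg_re]; linarith)
  have hzL : HasMellin (fun z : ℝ => (z : ℂ) ^ (1 : ℂ) • L z) s
      (Complex.Gamma (s + 1) • (Real.pi / (2 * Complex.sin (Real.pi * -s / 2)))) :=
    ⟨MellinConvergent.cpow_smul.2 hL.1, (mellin_cpow_smul _ _ _).trans hL.2⟩
  have hintegrand : ∀ z ∈ Ioi (0 : ℝ), Complex.exp ((s - 1) * (Real.log z : ℂ)) * (SOSEX.Xi z : ℂ)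
      = (z : ℂ) ^ (s - 1) • (z : ℂ) ^ (1 : ℂ) • L z := fun z hz => by
    rw [← ofReal_cpow_eq_exp_mul_log hz, Xi_eq_mul_laplace, Complex.cpow_one, smul_eq_mul,
      smul_eq_mul]
  refine ⟨hzL.1.congr_fun (fun z hz => (hintegrand z hz).symm) measurableSet_Ioi, ?_⟩
  rw [setIntegral_congr_fun measurableSet_Ioi hintegrand]
  refine hzL.2.trans ?_
  rw [smul_eq_mul, show (Real.pi : ℂ) * -s / 2 = -(Real.pi * s / 2) by ring, Complex.sin_neg]
  ring
end
end

section
/- Let I ⊆ (0,∞) be a nonempty interval, let D_q : I → ℝ with D_q(q) ≠ 0 for all q ∈ I, let u : I → (0,∞), and let J ⊆ [0,∞) contain at least two distinct points. If there exist functions D̃ : I → ℝ and w : J → ℝ such that D_q(q)·u(q)²/(u(q)² + z²) = D̃(q)·w(z) for all q ∈ I and z ∈ J, then u is constant on I. -/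
open Set

/-- Necessity of exact `q`–`z` separability in the one-pole family:
if `D_q(q)·u(q)²/(u(q)² + z²)` separates as `D̃(q)·w(z)` on a nonempty interval
`I ⊆ (0,∞)` and a set `J ⊆ [0,∞)` with at least two points, then `u` is constant on `I`. -/
theorem stmt11 (I : Set ℝ) (hIne : I.Nonempty) (hIsub : I ⊆ Ioi 0)
    (hIconn : I.OrdConnected)
    (Dq : ℝ → ℝ) (hDq : ∀ q ∈ I, Dq q ≠ 0)
    (u : ℝ → ℝ) (hu : ∀ q ∈ I, 0 < u q)
    (J : Set ℝ) (hJsub : J ⊆ Ici 0)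
    (z₁ z₂ : ℝ) (hz₁ : z₁ ∈ J) (hz₂ : z₂ ∈ J) (hzne : z₁ ≠ z₂)
    (Dt w : ℝ → ℝ)
    (hsep : ∀ q ∈ I, ∀ z ∈ J, Dq q * (u q) ^ 2 / ((u q) ^ 2 + z ^ 2) = Dt q * w z) :
    ∀ q₁ ∈ I, ∀ q₂ ∈ I, u q₁ = u q₂ := by
  -- key: for each q, w z₁ * (u q ^ 2 + z₁ ^ 2) = w z₂ * (u q ^ 2 + z₂ ^ 2)
  have key : ∀ q ∈ I, w z₁ * (u q ^ 2 + z₁ ^ 2) = w z₂ * (u q ^ 2 + z₂ ^ 2) := by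
    intro q hq
    have hupos := hu q hq
    have hd1 : (u q) ^ 2 + z₁ ^ 2 > 0 := by positivity
    have hd2 : (u q) ^ 2 + z₂ ^ 2 > 0 := by positivity
    have h1 := hsep q hq z₁ hz₁
    have h2 := hsep q hq z₂ hz₂
    have e1 : Dq q * (u q) ^ 2 = Dt q * w z₁ * ((u q) ^ 2 + z₁ ^ 2) := by
      field_simp at h1; linarith
    have e2 : Dq q * (u q) ^ 2 = Dt q * w z₂ * ((u q) ^ 2 + z₂ ^ 2) := by
      field_simp at h2; linarith
    have hA : Dq q * (u q) ^ 2 ≠ 0 := by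
      have := hDq q hq; positivity
    have hDt : Dt q ≠ 0 := by
      intro h; apply hA; rw [e1, h]; ring
    have : Dt q * (w z₁ * ((u q) ^ 2 + z₁ ^ 2)) =
        Dt q * (w z₂ * ((u q) ^ 2 + z₂ ^ 2)) := by
      rw [← mul_assoc, ← mul_assoc, ← e1, ← e2]
    exact mul_left_cancel₀ hDt this
  -- w z₁ ≠ 0 and w z₂ ≠ 0
  obtain ⟨q₀, hq₀⟩ := hIne
  have hw1 : w z₁ ≠ 0 := by
    intro h
    have hA : Dq q₀ * (u q₀) ^ 2 ≠ 0 := by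
      have := hDq q₀ hq₀; have := hu q₀ hq₀; positivity
    have hd1 : (u q₀) ^ 2 + z₁ ^ 2 > 0 := by have := hu q₀ hq₀; positivity
    have h1 := hsep q₀ hq₀ z₁ hz₁
    rw [h, mul_zero, div_eq_zero_iff] at h1
    rcases h1 with h1 | h1
    · exact hA h1
    · linarith
  have hw2 : w z₂ ≠ 0 := by
    intro h
    have hA : Dq q₀ * (u q₀) ^ 2 ≠ 0 := by
      have := hDq q₀ hq₀; have := hu q₀ hq₀; positivity
    have hd2 : (u q₀) ^ 2 + z₂ ^ 2 > 0 := by have := hu q₀ hq₀; positivity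
    have h2 := hsep q₀ hq₀ z₂ hz₂
    rw [h, mul_zero, div_eq_zero_iff] at h2
    rcases h2 with h2 | h2
    · exact hA h2
    · linarith
  have hzsq : z₁ ^ 2 ≠ z₂ ^ 2 := by
    have h1 := hJsub hz₁
    have h2 := hJsub hz₂
    simp only [mem_Ici] at h1 h2
    intro h
    exact hzne (by nlinarith [sq_abs z₁, sq_abs z₂, abs_of_nonneg h1, abs_of_nonneg h2])
  intro q₁ hq₁ q₂ hq₂
  have k1 := key q₁ hq₁
  have k2 := key q₂ hq₂
  -- eliminate w: w1*(a+z1²)=w2*(a+z2²), w1*(b+z1²)=w2*(b+z2²)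
  have hmul : w z₂ * ((u q₁ ^ 2 + z₂ ^ 2) * (u q₂ ^ 2 + z₁ ^ 2)
      - (u q₂ ^ 2 + z₂ ^ 2) * (u q₁ ^ 2 + z₁ ^ 2)) = 0 := by
    nlinarith [k1, k2]
  have heq : (u q₁ ^ 2 + z₂ ^ 2) * (u q₂ ^ 2 + z₁ ^ 2)
      = (u q₂ ^ 2 + z₂ ^ 2) * (u q₁ ^ 2 + z₁ ^ 2) := by
    rcases mul_eq_zero.mp hmul with h | h
    · exact absurd h hw2
    · linarith
  have hsq : u q₁ ^ 2 = u q₂ ^ 2 := by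
    have : (u q₁ ^ 2 - u q₂ ^ 2) * (z₁ ^ 2 - z₂ ^ 2) = 0 := by nlinarith [heq]
    rcases mul_eq_zero.mp this with h | h
    · linarith
    · exact absurd (by linarith : z₁ ^ 2 = z₂ ^ 2) hzsq
  have h1 := hu q₁ hq₁
  have h2 := hu q₂ hq₂
  nlinarith [hsq, h1, h2]
end

section
/- Fix δ ∈ (0,1) and C > 0, and let g : (0,δ] → ℂ be differentiable with |g(t)| ≤ C·(log(e/t))² and |g'(t)| ≤ C·log(e/t)/t for all t ∈ (0,δ]. Then there exists M > 0 such that for all real y with y ≥ max(e, 1/δ): |∫₀^δ g(t)·e^{iyt} dt| ≤ M·(log y)²/y. -/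
open MeasureTheory Set

/-!
Cut `(0, δ]` at `ε = y⁻²`. Near the singularity the oscillation is ignored: since
`log (e/t)² ≤ 32 t^(-1/2)`, the integral over `(0, ε]` is `O(√ε) = O(1/y)`. On `[ε, δ]`, one
integration by parts against `exp (i y t) / (i y)` bounds the integral by
`(‖g ε‖ + ‖g δ‖ + ∫ ‖g'‖) / y`, and the boundary values as well as `∫_ε^δ log (e/t) / t dt` are
`O(log (e/ε)²) = O((log y)²)`.
-/

theorem log_exp_one_div {t : ℝ} (ht : 0 < t) : Real.log (Real.exp 1 / t) = 1 - Real.log t := by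
  rw [Real.log_div (Real.exp_ne_zero 1) ht.ne', Real.log_exp]

theorem log_exp_one_div_nonneg {t : ℝ} (ht : 0 < t) (hte : t ≤ Real.exp 1) :
    0 ≤ Real.log (Real.exp 1 / t) :=
  Real.log_nonneg ((one_le_div ht).2 hte)

theorem log_exp_one_div_sq_le_rpow {t : ℝ} (ht : 0 < t) (hte : t ≤ Real.exp 1) :
    Real.log (Real.exp 1 / t) ^ 2 ≤ 32 * t ^ (-(1 / 2 : ℝ)) := by
  have hx : 0 < Real.exp 1 / t := div_pos (Real.exp_pos 1) ht
  have hlog : Real.log (Real.exp 1 / t) ≤ 4 * (Real.exp 1 / t) ^ (1 / 4 : ℝ) := by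
    have := Real.log_le_rpow_div hx.le (by norm_num : (0 : ℝ) < 1 / 4)
    linarith
  have hsqrt_e : Real.exp (1 / 2) ≤ 2 := by
    have := Real.exp_bound_div_one_sub_of_interval' (by norm_num : (0 : ℝ) < 1 / 2) (by norm_num)
    norm_num at this
    exact this.le
  calc Real.log (Real.exp 1 / t) ^ 2 ≤ (4 * (Real.exp 1 / t) ^ (1 / 4 : ℝ)) ^ 2 := by
        gcongr
        exact log_exp_one_div_nonneg ht hte
    _ = 16 * Real.exp (1 / 2) * t ^ (-(1 / 2 : ℝ)) := by
        rw [mul_pow, ← Real.rpow_mul_natCast hx.le, Real.div_rpow (Real.exp_pos 1).le ht.le,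
          Real.exp_one_rpow, Real.rpow_neg ht.le]
        norm_num
        ring
    _ ≤ 32 * t ^ (-(1 / 2 : ℝ)) := by
        have : 0 ≤ t ^ (-(1 / 2 : ℝ)) := by positivity
        nlinarith

theorem intervalIntegrable_of_norm_le_rpow {E : Type*} [NormedAddCommGroup E] {f : ℝ → E}
    {K r ε : ℝ} (hr : -1 < r) (hε : 0 ≤ ε)
    (hf : AEStronglyMeasurable f (volume.restrict (Ioc 0 ε)))
    (hbound : ∀ t ∈ Ioc 0 ε, ‖f t‖ ≤ K * t ^ r) : IntervalIntegrable f volume 0 ε := by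
  have hmaj : IntervalIntegrable (fun t => K * t ^ r) volume 0 ε :=
    (intervalIntegral.intervalIntegrable_rpow' hr).const_mul K
  rw [intervalIntegrable_iff_integrableOn_Ioc_of_le hε] at hmaj ⊢
  exact hmaj.mono' hf ((ae_restrict_iff' measurableSet_Ioc).2 (.of_forall hbound))

theorem norm_integral_le_of_norm_le_rpow {E : Type*} [NormedAddCommGroup E] [NormedSpace ℝ E]
    {f : ℝ → E} {K r ε : ℝ} (hr : -1 < r) (hε : 0 ≤ ε)
    (hbound : ∀ t ∈ Ioc 0 ε, ‖f t‖ ≤ K * t ^ r) :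
    ‖∫ t in 0..ε, f t‖ ≤ K * ε ^ (r + 1) / (r + 1) := by
  calc ‖∫ t in 0..ε, f t‖ ≤ ∫ t in 0..ε, K * t ^ r :=
        intervalIntegral.norm_integral_le_of_norm_le hε (.of_forall hbound)
          ((intervalIntegral.intervalIntegrable_rpow' hr).const_mul K)
    _ = K * ε ^ (r + 1) / (r + 1) := by
        rw [intervalIntegral.integral_const_mul, integral_rpow (Or.inl hr),
          Real.zero_rpow (by linarith : r + 1 ≠ 0)]
        ring

theorem ae_restrict_Ioc_of_forall_Ioo {p : ℝ → Prop} {a b : ℝ} (h : ∀ t ∈ Ioo a b, p t) :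
    ∀ᵐ t ∂volume.restrict (Ioc a b), p t := by
  rw [Measure.restrict_congr_set Ioo_ae_eq_Ioc.symm]
  exact (ae_restrict_iff' measurableSet_Ioo).2 (.of_forall h)

theorem hasDerivAt_cexp_mul_div (c : ℂ) (hc : c ≠ 0) (t : ℝ) :
    HasDerivAt (fun s : ℝ => Complex.exp (c * s) / c) (Complex.exp (c * t)) t := by
  have h := ((Complex.ofRealCLM.hasDerivAt (x := t)).const_mul c).cexp.div_const c
  simpa [mul_div_cancel_right₀ _ hc] using h

theorem norm_integral_mul_cexp_le {g g' : ℝ → ℂ} {G : ℝ → ℝ} {a b y : ℝ} (hab : a ≤ b)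
    (hy : y ≠ 0) (hgc : ContinuousOn g (Icc a b))
    (hderiv : ∀ t ∈ Ioo a b, HasDerivAt g (g' t) t)
    (hG : IntervalIntegrable G volume a b) (hg'G : ∀ t ∈ Ioo a b, ‖g' t‖ ≤ G t) :
    ‖∫ t in a..b, g t * Complex.exp (Complex.I * y * t)‖ ≤
      (‖g a‖ + ‖g b‖ + ∫ t in a..b, G t) / |y| := by
  set c : ℂ := Complex.I * y
  have hc : c ≠ 0 := mul_ne_zero Complex.I_ne_zero (Complex.ofReal_ne_zero.2 hy)
  set h : ℝ → ℂ := fun s => Complex.exp (c * s) / c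
  have hnorm_h : ∀ t : ℝ, ‖h t‖ = 1 / |y| := by
    intro t
    simp [h, c, Complex.norm_exp]
  have hg'_meas : AEStronglyMeasurable g' (volume.restrict (Ioc a b)) :=
    (measurable_deriv g).aestronglyMeasurable.congr
      (ae_restrict_Ioc_of_forall_Ioo fun t ht => (hderiv t ht).deriv)
  have hg'_int : IntervalIntegrable g' volume a b := by
    rw [intervalIntegrable_iff_integrableOn_Ioc_of_le hab] at hG ⊢
    exact hG.mono' hg'_meas (ae_restrict_Ioc_of_forall_Ioo hg'G)
  have hparts : ∫ t in a..b, g t * Complex.exp (c * t) =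
      g b * h b - g a * h a - ∫ t in a..b, g' t * h t := by
    refine intervalIntegral.integral_mul_deriv_eq_deriv_mul_of_hasDerivAt
      (by rwa [uIcc_of_le hab]) (by fun_prop) (by simpa [hab] using hderiv)
      (fun t _ => hasDerivAt_cexp_mul_div c hc t) hg'_int
      ((by fun_prop : Continuous _).intervalIntegrable _ _)
  have hrest : ‖∫ t in a..b, g' t * h t‖ ≤ (∫ t in a..b, G t) / |y| := by
    rw [← intervalIntegral.integral_div]
    refine intervalIntegral.norm_integral_le_of_norm_le hab ?_ (hG.div_const _)
    refine (ae_restrict_iff' measurableSet_Ioc).1 ?_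
    filter_upwards [ae_restrict_Ioc_of_forall_Ioo hg'G] with t ht
    rw [norm_mul, hnorm_h, mul_one_div]
    gcongr
  calc ‖∫ t in a..b, g t * Complex.exp (c * t)‖
      = ‖g b * h b - g a * h a - ∫ t in a..b, g' t * h t‖ := by rw [hparts]
    _ ≤ ‖g b‖ / |y| + ‖g a‖ / |y| + (∫ t in a..b, G t) / |y| := by
        refine (norm_sub_le _ _).trans (add_le_add ((norm_sub_le _ _).trans ?_) hrest)
        simp only [norm_mul, hnorm_h, mul_one_div, le_refl]
    _ = (‖g a‖ + ‖g b‖ + ∫ t in a..b, G t) / |y| := by ring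

theorem norm_le_rpow_of_norm_le_log_sq {E : Type*} [NormedAddCommGroup E] {f : ℝ → E}
    {C ε : ℝ} (hC : 0 ≤ C) (hεe : ε ≤ Real.exp 1)
    (hbound : ∀ t ∈ Ioc 0 ε, ‖f t‖ ≤ C * Real.log (Real.exp 1 / t) ^ 2) :
    ∀ t ∈ Ioc 0 ε, ‖f t‖ ≤ 32 * C * t ^ (-(1 / 2 : ℝ)) := fun t ht =>
  (hbound t ht).trans <| by
    rw [mul_comm 32 C, mul_assoc]
    exact mul_le_mul_of_nonneg_left (log_exp_one_div_sq_le_rpow ht.1 (ht.2.trans hεe)) hC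

theorem norm_integral_le_of_norm_le_log_sq {E : Type*} [NormedAddCommGroup E] [NormedSpace ℝ E]
    {f : ℝ → E} {C ε : ℝ} (hC : 0 ≤ C) (hε : 0 ≤ ε) (hεe : ε ≤ Real.exp 1)
    (hbound : ∀ t ∈ Ioc 0 ε, ‖f t‖ ≤ C * Real.log (Real.exp 1 / t) ^ 2) :
    ‖∫ t in 0..ε, f t‖ ≤ 64 * C * √ε := by
  refine (norm_integral_le_of_norm_le_rpow (by norm_num) hε
    (norm_le_rpow_of_norm_le_log_sq hC hεe hbound)).trans_eq ?_
  rw [Real.sqrt_eq_rpow]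
  norm_num
  ring

theorem norm_integral_mul_cexp_le_of_norm_le_log {g g' : ℝ → ℂ} {a b y C : ℝ} (ha : 0 < a)
    (hab : a ≤ b) (hbe : b ≤ Real.exp 1) (hy : y ≠ 0) (hC : 0 ≤ C)
    (hgc : ContinuousOn g (Icc a b)) (hderiv : ∀ t ∈ Ioo a b, HasDerivAt g (g' t) t)
    (hg : ∀ t ∈ Icc a b, ‖g t‖ ≤ C * Real.log (Real.exp 1 / t) ^ 2)
    (hg' : ∀ t ∈ Ioo a b, ‖g' t‖ ≤ C * Real.log (Real.exp 1 / t) / t) :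
    ‖∫ t in a..b, g t * Complex.exp (Complex.I * y * t)‖ ≤
      3 * C * Real.log (Real.exp 1 / a) ^ 2 / |y| := by
  set Λ := Real.log (Real.exp 1 / a)
  have hlog : ∀ t ∈ Icc a b, 0 ≤ Real.log (Real.exp 1 / t) ∧ Real.log (Real.exp 1 / t) ≤ Λ :=
    fun t ht => ⟨log_exp_one_div_nonneg (ha.trans_le ht.1) (ht.2.trans hbe), by
      simp only [Λ]
      rw [log_exp_one_div ha, log_exp_one_div (ha.trans_le ht.1)]
      linarith [Real.log_le_log ha ht.1]⟩
  have hGc : ContinuousOn (fun t => C * Λ * t⁻¹) (uIcc a b) :=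
    continuousOn_const.mul (continuousOn_inv₀.mono fun t ht =>
      (ha.trans_le (uIcc_of_le hab ▸ ht).1).ne')
  have hGint : ∫ t in a..b, C * Λ * t⁻¹ = C * Λ * Real.log (b / a) := by
    rw [intervalIntegral.integral_const_mul, integral_inv_of_pos ha (ha.trans_le hab)]
  refine (norm_integral_mul_cexp_le hab hy hgc hderiv hGc.intervalIntegrable
    (fun t ht => (hg' t ht).trans ?_)).trans (div_le_div_of_nonneg_right ?_ (abs_nonneg y))
  · obtain ⟨h0, hle⟩ := hlog t (Ioo_subset_Icc_self ht)
    have ht0 : 0 ≤ t := (ha.trans ht.1).le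
    rw [div_eq_mul_inv]
    gcongr
  · obtain ⟨hΛ0, -⟩ := hlog a (left_mem_Icc.2 hab)
    obtain ⟨hb0, hb⟩ := hlog b (right_mem_Icc.2 hab)
    have hgb : ‖g b‖ ≤ C * Λ ^ 2 := (hg b (right_mem_Icc.2 hab)).trans (by gcongr)
    have hba : Real.log (b / a) ≤ Λ :=
      Real.log_le_log (div_pos (ha.trans_le hab) ha) (div_le_div_of_nonneg_right hbe ha.le)
    have := mul_le_mul_of_nonneg_left hba (mul_nonneg hC hΛ0)
    rw [hGint]
    linarith [hg a (left_mem_Icc.2 hab)]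

theorem norm_integral_mul_cexp_le_of_norm_le_log_of_cutoff {g g' : ℝ → ℂ} {δ ε y C : ℝ}
    (hε : 0 < ε) (hεδ : ε ≤ δ) (hδe : δ ≤ Real.exp 1) (hy : y ≠ 0) (hC : 0 ≤ C)
    (hgc : ContinuousOn g (Ioc 0 δ)) (hderiv : ∀ t ∈ Ioo 0 δ, HasDerivAt g (g' t) t)
    (hg : ∀ t ∈ Ioc 0 δ, ‖g t‖ ≤ C * Real.log (Real.exp 1 / t) ^ 2)
    (hg' : ∀ t ∈ Ioo 0 δ, ‖g' t‖ ≤ C * Real.log (Real.exp 1 / t) / t) :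
    ‖∫ t in 0..δ, g t * Complex.exp (Complex.I * y * t)‖ ≤
      64 * C * √ε + 3 * C * Real.log (Real.exp 1 / ε) ^ 2 / |y| := by
  set f := fun t : ℝ => g t * Complex.exp (Complex.I * y * t)
  have hf_bound : ∀ t ∈ Ioc 0 δ, ‖f t‖ ≤ C * Real.log (Real.exp 1 / t) ^ 2 := fun t ht => by
    simpa [f, Complex.norm_exp] using hg t ht
  have hf_int : IntervalIntegrable f volume 0 δ :=
    intervalIntegrable_of_norm_le_rpow (by norm_num) (hε.le.trans hεδ)
      ((hgc.mul (by fun_prop)).aestronglyMeasurable measurableSet_Ioc)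
      (norm_le_rpow_of_norm_le_log_sq hC hδe hf_bound)
  rw [← intervalIntegral.integral_add_adjacent_intervals
    (hf_int.mono_set (uIcc_subset_uIcc_left (mem_uIcc_of_le hε.le hεδ)))
    (hf_int.mono_set (uIcc_subset_uIcc_right (mem_uIcc_of_le hε.le hεδ)))]
  refine norm_add_le_of_le
    (norm_integral_le_of_norm_le_log_sq hC hε.le (hεδ.trans hδe)
      fun t ht => hf_bound t ⟨ht.1, ht.2.trans hεδ⟩)
    (norm_integral_mul_cexp_le_of_norm_le_log hε hεδ hδe hy hC
      (hgc.mono fun t ht => ⟨hε.trans_le ht.1, ht.2⟩)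
      (fun t ht => hderiv t ⟨hε.trans ht.1, ht.2⟩)
      (fun t ht => hg t ⟨hε.trans_le ht.1, ht.2⟩) (fun t ht => hg' t ⟨hε.trans ht.1, ht.2⟩))

/-- Oscillatory integral with logarithmic endpoint singularity:
if `g : (0,δ] → ℂ` is differentiable with `|g(t)| ≤ C(log(e/t))²` and
`|g'(t)| ≤ C·log(e/t)/t`, then `∫₀^δ g(t)e^{iyt} dt = O((log y)²/y)` for
`y ≥ max(e, 1/δ)`. -/
theorem stmt14 (δ : ℝ) (hδ1 : 0 < δ) (hδ2 : δ < 1) (C : ℝ) (hC : 0 < C)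
    (g g' : ℝ → ℂ)
    (hderiv : ∀ t ∈ Ioc (0 : ℝ) δ, HasDerivWithinAt g (g' t) (Ioc (0 : ℝ) δ) t)
    (hg : ∀ t ∈ Ioc (0 : ℝ) δ,
      ‖g t‖ ≤ C * (Real.log (Real.exp 1 / t)) ^ 2)
    (hg' : ∀ t ∈ Ioc (0 : ℝ) δ,
      ‖g' t‖ ≤ C * Real.log (Real.exp 1 / t) / t) :
    ∃ M : ℝ, 0 < M ∧ ∀ y : ℝ, max (Real.exp 1) (1 / δ) ≤ y →
      ‖∫ t in Ioc (0 : ℝ) δ, g t * Complex.exp (Complex.I * y * t)‖ ≤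
        M * (Real.log y) ^ 2 / y := by
  refine ⟨91 * C, by positivity, fun y hy => ?_⟩
  have hye : Real.exp 1 ≤ y := le_of_max_le_left hy
  have hy0 : 0 < y := (Real.exp_pos 1).trans_le hye
  have hL : 1 ≤ Real.log y := by simpa using Real.log_le_log (Real.exp_pos 1) hye
  have hyδ : y⁻¹ ≤ δ := by rw [inv_le_comm₀ hy0 hδ1]; simpa using le_of_max_le_right hy
  have hδe : δ ≤ Real.exp 1 := hδ2.le.trans (Real.one_le_exp zero_le_one)
  set ε := y⁻¹ ^ 2
  have hε0 : 0 < ε := by positivity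
  have hεδ : ε ≤ δ := (pow_le_of_le_one (inv_nonneg.2 hy0.le)
    (inv_le_one_of_one_le₀ ((Real.one_le_exp zero_le_one).trans hye)) two_ne_zero).trans hyδ
  have hlog_ε : Real.log (Real.exp 1 / ε) ≤ 3 * Real.log y := by
    rw [log_exp_one_div hε0, Real.log_pow, Real.log_inv]; push_cast; linarith
  have hlog_ε0 := log_exp_one_div_nonneg hε0 (hεδ.trans hδe)
  rw [← intervalIntegral.integral_of_le hδ1.le]
  refine (norm_integral_mul_cexp_le_of_norm_le_log_of_cutoff hε0 hεδ hδe hy0.ne' hC.le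
    (fun t ht => (hderiv t ht).continuousWithinAt)
    (fun t ht => (hderiv t (Ioo_subset_Ioc_self ht)).hasDerivAt (Ioc_mem_nhds ht.1 ht.2)) hg
    (fun t ht => hg' t (Ioo_subset_Ioc_self ht))).trans ?_
  rw [Real.sqrt_sq (inv_nonneg.2 hy0.le), abs_of_pos hy0, ← div_eq_mul_inv]
  calc _ ≤ 64 * C * Real.log y ^ 2 / y + 3 * C * (3 * Real.log y) ^ 2 / y :=
        add_le_add (div_le_div_of_nonneg_right
          (le_mul_of_one_le_right (by positivity) (one_le_pow₀ hL)) hy0.le) (by gcongr)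
    _ = 91 * C * Real.log y ^ 2 / y := by ring
end

section
/- For every real u > 1: ∫₀¹ (-log(u·v))/(u² - v²) dv = (1/(2u))·( Σ_{n=1}^∞ (1/u)ⁿ/n² - Σ_{n=1}^∞ (-1/u)ⁿ/n² - log u · log((u+1)/(u-1)) ). -/
/-! Since `-log (u v) = -log u - log v`, the integral splits in two. The first part is elementary:
`(u² - v²)⁻¹` has antiderivative `(log (u + v) - log (u - v)) / (2u)`. For the second, expand
`(u² - v²)⁻¹ = ∑ v^(2n) / u^(2n+2)` and integrate termwise (all terms are nonnegative), using
`∫₀¹ vᵏ (-log v) dv = 1 / (k+1)²`. The result `∑ u^-(2n+2) / (2n+1)²` is `u⁻¹` times the odd part of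
the series of `Li₂(1/u)`, that is `(Li₂(1/u) - Li₂(-1/u)) / (2u)`. -/

open MeasureTheory Set Real

lemma summable_pow_succ_div_sq {x : ℝ} (hx : |x| ≤ 1) :
    Summable fun n : ℕ => x ^ (n + 1) / ((n : ℝ) + 1) ^ 2 := by
  have hp : Summable fun n : ℕ => 1 / ((n : ℝ) + 1) ^ 2 := by
    simpa using (summable_nat_add_iff 1).2 (summable_one_div_nat_pow.2 one_lt_two)
  refine hp.of_norm_bounded fun n => ?_
  rw [norm_div, norm_pow, norm_pow, Real.norm_eq_abs, Real.norm_of_nonneg (by positivity)]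
  gcongr
  exact pow_le_one₀ (abs_nonneg x) hx

lemma hasSum_two_mul_odd_pow_div_sq {x : ℝ} (hx : |x| ≤ 1) :
    HasSum (fun k : ℕ => 2 * (x ^ (2 * k + 1) / (2 * (k : ℝ) + 1) ^ 2))
      ((∑' n : ℕ, x ^ (n + 1) / ((n : ℝ) + 1) ^ 2) -
        ∑' n : ℕ, (-x) ^ (n + 1) / ((n : ℝ) + 1) ^ 2) := by
  have h := (summable_pow_succ_div_sq hx).hasSum.sub
    (summable_pow_succ_div_sq (x := -x) (by rwa [abs_neg])).hasSum
  rw [← (mul_right_injective₀ (two_ne_zero' ℕ)).hasSum_iff] at h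
  · refine h.congr_fun fun k => ?_
    simp only [Function.comp_apply, Odd.neg_pow (odd_two_mul_add_one k)]
    push_cast
    ring
  · intro n hn
    obtain ⟨k, rfl⟩ : Odd n := Nat.not_even_iff_odd.1 fun ⟨k, hk⟩ => hn ⟨k, show 2 * k = n by omega⟩
    rw [Even.neg_pow ⟨k + 1, by ring⟩, sub_self]

lemma hasSum_inv_sq_sub_sq {u v : ℝ} (h : |v| < u) :
    HasSum (fun n : ℕ => u⁻¹ ^ (2 * n + 2) * v ^ (2 * n)) (u ^ 2 - v ^ 2)⁻¹ := by
  have hu : 0 < u := (abs_nonneg v).trans_lt h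
  have hr : v ^ 2 / u ^ 2 < 1 := (div_lt_one (by positivity)).2 (sq_lt_sq.2 (by rwa [abs_of_pos hu]))
  have h := (hasSum_geometric_of_lt_one (by positivity) hr).mul_left (u ^ 2)⁻¹
  rw [show (u ^ 2)⁻¹ * (1 - v ^ 2 / u ^ 2)⁻¹ = (u ^ 2 - v ^ 2)⁻¹ by field_simp] at h
  refine h.congr_fun fun n => ?_
  rw [div_pow, pow_mul]
  ring

lemma abs_lt_of_mem_uIcc_zero {u b v : ℝ} (hb : |b| < u) (hv : v ∈ uIcc 0 b) : |v| < u :=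
  (by simpa using abs_sub_left_of_mem_uIcc hv : |v| ≤ |b|).trans_lt hb

lemma continuousOn_inv_sq_sub_sq {u b : ℝ} (hb : |b| < u) :
    ContinuousOn (fun v : ℝ => (u ^ 2 - v ^ 2)⁻¹) (uIcc 0 b) :=
  (continuous_const.sub (continuous_pow 2)).continuousOn.inv₀ fun v hv => by
    have hvu := abs_lt_of_mem_uIcc_zero hb hv
    simp only [Pi.sub_apply, sub_ne_zero]
    exact (sq_lt_sq.2 (by rwa [abs_of_pos ((abs_nonneg v).trans_lt hvu)])).ne'

lemma integral_inv_sq_sub_sq {u b : ℝ} (hb : |b| < u) :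
    ∫ v in (0 : ℝ)..b, (u ^ 2 - v ^ 2)⁻¹ = log ((u + b) / (u - b)) / (2 * u) := by
  have hu : 0 < u := (abs_nonneg b).trans_lt hb
  have hpos : ∀ v ∈ uIcc 0 b, 0 < u + v ∧ 0 < u - v := fun v hv => by
    obtain ⟨h₁, h₂⟩ := abs_lt.1 (abs_lt_of_mem_uIcc_zero hb hv)
    constructor <;> linarith
  have hderiv : ∀ v ∈ uIcc 0 b,
      HasDerivAt (fun v => (log (u + v) - log (u - v)) / (2 * u)) (u ^ 2 - v ^ 2)⁻¹ v := by
    intro v hv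
    obtain ⟨hp, hm⟩ := hpos v hv
    refine ((((hasDerivAt_id v).const_add u).log hp.ne').sub
      (((hasDerivAt_id v).const_sub u).log hm.ne')).div_const (2 * u) |>.congr_deriv ?_
    have hsq : u ^ 2 - v ^ 2 ≠ 0 := (by nlinarith [mul_pos hp hm] : 0 < u ^ 2 - v ^ 2).ne'
    simp only [id]
    field_simp
    ring
  obtain ⟨hp, hm⟩ := hpos b right_mem_uIcc
  rw [intervalIntegral.integral_eq_sub_of_hasDerivAt hderiv
    (continuousOn_inv_sq_sub_sq hb).intervalIntegrable, log_div hp.ne' hm.ne']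
  simp

lemma intervalIntegrable_pow_mul_neg_log (k : ℕ) (a b : ℝ) :
    IntervalIntegrable (fun v : ℝ => v ^ k * -log v) volume a b :=
  intervalIntegral.intervalIntegrable_log'.neg.continuousOn_mul (continuous_pow k).continuousOn

lemma integral_pow_mul_neg_log (k : ℕ) :
    ∫ v in (0 : ℝ)..1, v ^ k * -log v = 1 / ((k : ℝ) + 1) ^ 2 := by
  have hk : (k : ℝ) + 1 ≠ 0 := by positivity
  set G : ℝ → ℝ :=
    fun v => (v ^ (k + 1) - ((k : ℝ) + 1) * (v ^ (k + 1) * log v)) / ((k : ℝ) + 1) ^ 2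
  have hG_cont : Continuous G :=
    (((continuous_pow (k + 1)).sub (continuous_const.mul
      (((continuous_pow k).mul continuous_mul_log).congr fun v => by
        simp only [Pi.mul_apply]; ring))).div_const _)
  have hG_deriv : ∀ v ∈ Ioo (0 : ℝ) 1, HasDerivAt G (v ^ k * -log v) v := by
    intro v hv
    have hpow : HasDerivAt (fun v : ℝ => v ^ (k + 1)) (((k : ℝ) + 1) * v ^ k) v := by
      simpa using hasDerivAt_pow (k + 1) v
    refine ((hpow.sub ((hpow.mul (hasDerivAt_log hv.1.ne')).const_mul _)).div_const _).congr_deriv ?_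
    have hv0 : v ≠ 0 := hv.1.ne'
    field_simp
    ring
  rw [intervalIntegral.integral_eq_sub_of_hasDerivAt_of_le zero_le_one hG_cont.continuousOn
    hG_deriv (intervalIntegrable_pow_mul_neg_log k 0 1)]
  simp [G]

lemma hasSum_integral_neg_log_div_sq_sub_sq {u : ℝ} (hu : 1 < u) :
    HasSum (fun n : ℕ => u⁻¹ ^ (2 * n + 2) / (2 * (n : ℝ) + 1) ^ 2)
      (∫ v in (0 : ℝ)..1, -log v / (u ^ 2 - v ^ 2)) := by
  set F : ℕ → ℝ → ℝ := fun n v => u⁻¹ ^ (2 * n + 2) * (v ^ (2 * n) * -log v)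
  have hF_nonneg : ∀ n, ∀ v ∈ Ioc (0 : ℝ) 1, 0 ≤ F n v := fun n v hv =>
    mul_nonneg (by positivity) (mul_nonneg (pow_nonneg hv.1.le _)
      (neg_nonneg.2 (log_nonpos hv.1.le hv.2)))
  have hF_int : ∀ n, Integrable (F n) (volume.restrict (Ioc 0 1)) := fun n =>
    ((intervalIntegrable_pow_mul_neg_log (2 * n) 0 1).const_mul _).1
  have hF_integral : ∀ n,
      ∫ v in Ioc (0 : ℝ) 1, F n v = u⁻¹ ^ (2 * n + 2) / (2 * (n : ℝ) + 1) ^ 2 := by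
    intro n
    rw [integral_const_mul, ← intervalIntegral.integral_of_le zero_le_one,
      integral_pow_mul_neg_log]
    push_cast
    ring
  have hsummable : Summable fun n : ℕ => u⁻¹ ^ (2 * n + 2) / (2 * (n : ℝ) + 1) ^ 2 := by
    have hq : u⁻¹ ^ 2 < 1 := pow_lt_one₀ (by positivity) (inv_lt_one_of_one_lt₀ hu) two_ne_zero
    refine ((summable_geometric_of_lt_one (by positivity) hq).mul_right (u⁻¹ ^ 2)).of_nonneg_of_le
      (fun n => by positivity) fun n => ?_
    rw [← pow_mul, ← pow_add]
    exact div_le_self (by positivity) (one_le_pow₀ (by linarith [n.cast_nonneg (α := ℝ)]))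
  have h := hasSum_integral_of_summable_integral_norm hF_int <| by
    refine hsummable.congr fun n => ?_
    rw [← hF_integral]
    exact setIntegral_congr_fun measurableSet_Ioc fun v hv =>
      (Real.norm_of_nonneg (hF_nonneg n v hv)).symm
  simp only [hF_integral] at h
  rw [intervalIntegral.integral_of_le zero_le_one,
    setIntegral_congr_fun measurableSet_Ioc fun v hv => ?_]
  · exact h
  have hv : |v| < u := by rw [abs_of_pos hv.1]; linarith [hv.2]
  rw [div_eq_mul_inv, mul_comm, ← ((hasSum_inv_sq_sub_sq hv).mul_right (-log v)).tsum_eq]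
  exact tsum_congr fun n => by ring

lemma integral_neg_log_mul_div_sq_sub_sq {u : ℝ} (hu : 1 < u) :
    ∫ v in Ioo (0 : ℝ) 1, -log (u * v) / (u ^ 2 - v ^ 2) =
      -log u * (∫ v in (0 : ℝ)..1, (u ^ 2 - v ^ 2)⁻¹) +
        ∫ v in (0 : ℝ)..1, -log v / (u ^ 2 - v ^ 2) := by
  have hcont := continuousOn_inv_sq_sub_sq (b := 1) (by rwa [abs_one])
  have hint : IntervalIntegrable (fun v => -log v / (u ^ 2 - v ^ 2)) volume 0 1 := by
    simpa only [div_eq_mul_inv, Pi.neg_apply] using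
      intervalIntegral.intervalIntegrable_log'.neg.mul_continuousOn hcont
  rw [← intervalIntegral.integral_const_mul,
    ← intervalIntegral.integral_add (hcont.intervalIntegrable.const_mul _) hint,
    intervalIntegral.integral_of_le zero_le_one, integral_Ioc_eq_integral_Ioo]
  refine setIntegral_congr_fun measurableSet_Ioo fun v hv => ?_
  rw [log_mul (by linarith) hv.1.ne']
  ring

/-- Exact formula for the `u`-channel amplitude:
`∫₀¹ (-log(uv))/(u²-v²) dv = (1/(2u))(Li₂(1/u) - Li₂(-1/u) - log u · log((u+1)/(u-1)))`,
with the dilogarithms given by their convergent power series. -/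
theorem stmt15 (u : ℝ) (hu : 1 < u) :
    (∫ v in Ioo (0 : ℝ) 1, (-Real.log (u * v)) / (u ^ 2 - v ^ 2)) =
      (1 / (2 * u)) *
        ((∑' n : ℕ, (1 / u) ^ (n + 1) / ((n : ℝ) + 1) ^ 2) -
         (∑' n : ℕ, (-1 / u) ^ (n + 1) / ((n : ℝ) + 1) ^ 2) -
         Real.log u * Real.log ((u + 1) / (u - 1))) := by
  have hu0 : 0 < u := zero_lt_one.trans hu
  have hodd := (hasSum_two_mul_odd_pow_div_sq (x := u⁻¹)
    (by rw [abs_inv, abs_of_pos hu0]; exact inv_le_one_of_one_le₀ hu.le)).mul_left (2 * u)⁻¹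
  rw [integral_neg_log_mul_div_sq_sub_sq hu, integral_inv_sq_sub_sq (by rwa [abs_one]),
    (hasSum_integral_neg_log_div_sq_sub_sq hu).unique (hodd.congr_fun fun n => ?_),
    one_div, neg_div, one_div]
  · field_simp
    ring
  · rw [pow_succ _ (2 * n + 1)]
    field_simp
end

section
/- Define J(u) = ∫₀¹ (-log(u·v))/(u² - v²) dv for u > 1. Then: (i) there exist C > 0 and η₀ ∈ (0,1/2) such that for all u with 1 < u ≤ 1 + η₀, |J(u) - π²/8| ≤ C·(u-1)·|log(u-1)|; and (ii) there exist C' > 0 and U ≥ 2 such that for all u ≥ U, |J(u) - (1 - log u)/u²| ≤ C'·(1 + log u)/u⁴. -/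
open MeasureTheory Set

noncomputable section

namespace SOSEX

/-- `J(u) = ∫₀¹ (-log(u·v))/(u²-v²) dv`. -/
def Jfun (u : ℝ) : ℝ := ∫ v in Ioo (0 : ℝ) 1, (-Real.log (u * v)) / (u ^ 2 - v ^ 2)

end SOSEX

/-!
Near `u = 1` the integrand is compared with its value `-log v / (1 - v²)` at `u = 1`: expanding
`1 / (1 - v²)` as a geometric series and using `∫₀¹ -log v · vⁿ dv = 1 / (n + 1)²` gives
`∑ 1 / (2n + 1)² = π² / 8` for its integral. By `-log v ≤ (1 - v)(1 - log v)` the difference of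
the integrands is at most `(u - 1) / (u - v) + (u² - 1)(1 / (u - v) + 1 - log v)`, whose integral
`(u - 1) D + (u² - 1)(D + 2)` with `D = log u - log (u - 1)` is `O((u - 1) |log (u - 1)|)`.

For large `u` the integrand is compared with `-log (u v) / u²`; the difference
`-log (u v) · v² / (u² (u² - v²))` is at most `(log u - log v) / (u² (u² - 1))` in absolute value.
-/

open Real

namespace SOSEX

theorem abs_integral_sub_integral_le {α : Type*} [MeasurableSpace α] {μ : Measure α}
    {f g B : α → ℝ} (hf : Integrable f μ) (hg : Integrable g μ) (hB : Integrable B μ)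
    (h : ∀ᵐ x ∂μ, ‖f x - g x‖ ≤ B x) :
    |∫ x, f x ∂μ - ∫ x, g x ∂μ| ≤ ∫ x, B x ∂μ := by
  rw [← integral_sub hf hg]
  exact norm_integral_le_of_norm_le hB h

theorem setIntegral_Ioo_eq_intervalIntegral (f : ℝ → ℝ) {a b : ℝ} (hab : a ≤ b) :
    ∫ v in Ioo a b, f v = ∫ v in a..b, f v := by
  rw [intervalIntegral.integral_of_le hab, integral_Ioc_eq_integral_Ioo]

theorem intervalIntegrable_neg_log_mul_pow (n : ℕ) :
    IntervalIntegrable (fun v => -log v * v ^ n) volume 0 1 :=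
  intervalIntegral.intervalIntegrable_log'.neg.mul_continuousOn (continuous_pow n).continuousOn

theorem integrableOn_neg_log_Ioo : IntegrableOn (fun v => -log v) (Ioo (0 : ℝ) 1) :=
  (intervalIntegral.intervalIntegrable_log' (a := 0) (b := 1)).1.neg.mono_set Ioo_subset_Ioc_self

theorem integrableOn_const_add_neg_log (a : ℝ) :
    IntegrableOn (fun v => a + -log v) (Ioo (0 : ℝ) 1) :=
  (integrableOn_const measure_Ioo_lt_top.ne).add integrableOn_neg_log_Ioo

theorem integral_neg_log_mul_pow (n : ℕ) :
    ∫ v in Ioo (0 : ℝ) 1, -log v * v ^ n = 1 / ((n : ℝ) + 1) ^ 2 := by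
  set c : ℝ := n + 1
  have hc : c ≠ 0 := by positivity
  set F : ℝ → ℝ := fun v => (v ^ (n + 1) - c * (v ^ (n + 1) * log v)) / c ^ 2
  -- `v ^ (n + 1) * log v = v ^ n * (v * log v)` extends continuously by `0` at `v = 0`.
  have hF : Continuous F := by
    have hF_eq : F = fun v => (v ^ (n + 1) - c * (v ^ n * (v * log v))) / c ^ 2 := by
      funext v; ring
    have := continuous_mul_log
    rw [hF_eq]
    fun_prop
  have hF' : ∀ v ∈ Ioo (0 : ℝ) 1, HasDerivAt F (-log v * v ^ n) v := by
    intro v hv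
    have h := ((hasDerivAt_pow (n + 1) v).sub
      (((hasDerivAt_pow (n + 1) v).mul (hasDerivAt_log hv.1.ne')).const_mul c)).div_const (c ^ 2)
    refine h.congr_deriv ?_
    simp only [c, Nat.add_sub_cancel, Nat.cast_add, Nat.cast_one]
    field_simp [hv.1.ne']
    ring
  rw [setIntegral_Ioo_eq_intervalIntegral _ zero_le_one,
    intervalIntegral.integral_eq_sub_of_hasDerivAt_of_le zero_le_one hF.continuousOn hF'
      (intervalIntegrable_neg_log_mul_pow n)]
  simp [F, c]

theorem integral_const_add_neg_log (a : ℝ) : ∫ v in Ioo (0 : ℝ) 1, (a + -log v) = a + 1 := by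
  have ha : IntegrableOn (fun _ => a) (Ioo (0 : ℝ) 1) := integrableOn_const measure_Ioo_lt_top.ne
  have hlog : ∫ v in Ioo (0 : ℝ) 1, -log v = 1 := by simpa using integral_neg_log_mul_pow 0
  rw [integral_add ha integrableOn_neg_log_Ioo, hlog, setIntegral_const]
  simp

theorem hasSum_one_div_odd_sq :
    HasSum (fun n : ℕ => 1 / ((2 * n + 1 : ℕ) : ℝ) ^ 2) (π ^ 2 / 8) := by
  have hEven : HasSum (fun n : ℕ => 1 / ((2 * n : ℕ) : ℝ) ^ 2) (π ^ 2 / 6 / 4) :=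
    (hasSum_zeta_two.div_const 4).congr_fun fun n => by push_cast; ring
  have hOdd : Summable (fun n : ℕ => 1 / ((2 * n + 1 : ℕ) : ℝ) ^ 2) :=
    hasSum_zeta_two.summable.comp_injective (i := fun n => 2 * n + 1) fun a b h => by
      simp only at h; omega
  have := (HasSum.even_add_odd (f := fun n : ℕ => 1 / (n : ℝ) ^ 2) hEven hOdd.hasSum).unique
    hasSum_zeta_two
  convert hOdd.hasSum using 1
  linarith

theorem integral_neg_log_div_one_sub_sq :
    ∫ v in Ioo (0 : ℝ) 1, -log v / (1 - v ^ 2) = π ^ 2 / 8 := by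
  set F : ℕ → ℝ → ℝ := fun n v => -log v * v ^ (2 * n)
  have hF_int : ∀ n, IntegrableOn (F n) (Ioo (0 : ℝ) 1) := fun n =>
    (intervalIntegrable_neg_log_mul_pow (2 * n)).1.mono_set Ioo_subset_Ioc_self
  have hF_nonneg : ∀ n, ∀ v ∈ Ioo (0 : ℝ) 1, 0 ≤ F n v := fun n v hv =>
    mul_nonneg (neg_nonneg.2 (log_nonpos hv.1.le hv.2.le)) (pow_nonneg hv.1.le _)
  have hF_integral : ∀ n, ∫ v in Ioo (0 : ℝ) 1, F n v = 1 / ((2 * n + 1 : ℕ) : ℝ) ^ 2 := by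
    intro n
    simp only [F, integral_neg_log_mul_pow]
    push_cast
    rfl
  have hF_norm : ∀ n, ∫ v in Ioo (0 : ℝ) 1, ‖F n v‖ = ∫ v in Ioo (0 : ℝ) 1, F n v := fun n =>
    setIntegral_congr_fun measurableSet_Ioo fun v hv => Real.norm_of_nonneg (hF_nonneg n v hv)
  have hsum := hasSum_integral_of_summable_integral_norm hF_int
    (by simpa only [hF_norm, hF_integral] using hasSum_one_div_odd_sq.summable)
  simp only [hF_integral] at hsum
  rw [hasSum_one_div_odd_sq.unique hsum]
  refine setIntegral_congr_fun measurableSet_Ioo fun v hv => ?_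
  have hv2 : v ^ 2 < 1 := by nlinarith [hv.1, hv.2]
  simp only [F, pow_mul, tsum_mul_left, tsum_geometric_of_lt_one (sq_nonneg v) hv2,
    div_eq_mul_inv]

theorem neg_log_div_one_sub_le {v : ℝ} (hv0 : 0 < v) (hv1 : v < 1) :
    -log v / (1 - v) ≤ 1 + -log v := by
  rw [div_le_iff₀ (sub_pos.2 hv1)]
  have h : v - 1 ≤ v * log v := by
    have := mul_le_mul_of_nonneg_left (one_sub_inv_le_log_of_pos hv0) hv0.le
    rwa [mul_sub, mul_inv_cancel₀ hv0.ne', mul_one] at this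
  nlinarith

theorem abs_log_mul_le {u v : ℝ} (hu : 1 ≤ u) (hv0 : 0 < v) (hv1 : v ≤ 1) :
    |log (u * v)| ≤ log u + -log v := by
  rw [log_mul (by positivity) hv0.ne']
  exact (abs_add_le _ _).trans_eq
    (by rw [abs_of_nonneg (log_nonneg hu), abs_of_nonpos (log_nonpos hv0.le hv1)])

theorem integrableOn_inv_sub {u : ℝ} (hu : 1 < u) :
    IntegrableOn (fun v => (u - v)⁻¹) (Ioo (0 : ℝ) 1) := by
  have hcont : ContinuousOn (fun v : ℝ => (u - v)⁻¹) (Icc 0 1) :=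
    (continuousOn_const.sub continuousOn_id).inv₀ fun v hv => (sub_pos.2 (hv.2.trans_lt hu)).ne'
  exact hcont.integrableOn_Icc.mono_set Ioo_subset_Icc_self

theorem integral_inv_sub {u : ℝ} (hu : 1 < u) :
    ∫ v in Ioo (0 : ℝ) 1, (u - v)⁻¹ = log u - log (u - 1) := by
  rw [setIntegral_Ioo_eq_intervalIntegral _ zero_le_one,
    intervalIntegral.integral_comp_sub_left (fun x => x⁻¹) u, sub_zero,
    integral_inv_of_pos (by linarith) (by linarith), log_div (by positivity) (by linarith)]

theorem integrableOn_neg_log_div_one_sub_sq :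
    IntegrableOn (fun v => -log v / (1 - v ^ 2)) (Ioo (0 : ℝ) 1) := by
  refine (integrableOn_const_add_neg_log 1).mono' (by fun_prop : Measurable _).aestronglyMeasurable
    (ae_restrict_of_forall_mem measurableSet_Ioo fun v ⟨hv0, hv1⟩ => ?_)
  have hw : 0 ≤ -log v := neg_nonneg.2 (log_nonpos hv0.le hv1.le)
  calc ‖-log v / (1 - v ^ 2)‖ = -log v / (1 - v ^ 2) :=
        Real.norm_of_nonneg (div_nonneg hw (by nlinarith))
    _ ≤ -log v / (1 - v) := div_le_div_of_nonneg_left hw (by linarith) (by nlinarith)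
    _ ≤ 1 + -log v := neg_log_div_one_sub_le hv0 hv1

theorem integrableOn_Jfun_integrand {u : ℝ} (hu : 1 < u) :
    IntegrableOn (fun v => -log (u * v) / (u ^ 2 - v ^ 2)) (Ioo (0 : ℝ) 1) := by
  refine ((integrableOn_const_add_neg_log (log u)).div_const (u ^ 2 - 1)).mono'
    (by fun_prop : Measurable _).aestronglyMeasurable
    (ae_restrict_of_forall_mem measurableSet_Ioo fun v ⟨hv0, hv1⟩ => ?_)
  rw [Real.norm_eq_abs, abs_div, abs_neg, abs_of_pos (a := u ^ 2 - v ^ 2) (by nlinarith)]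
  exact div_le_div₀ (by linarith [log_nonneg hu.le, log_nonpos hv0.le hv1.le])
    (abs_log_mul_le hu.le hv0 hv1.le) (by nlinarith) (by nlinarith)

theorem abs_Jfun_integrand_sub_at_one_le {u v : ℝ} (hu : 1 < u) (hv0 : 0 < v) (hv1 : v < 1) :
    |-log (u * v) / (u ^ 2 - v ^ 2) - -log v / (1 - v ^ 2)|
      ≤ (u - 1) * (u - v)⁻¹ + (u ^ 2 - 1) * ((u - v)⁻¹ + (1 + -log v)) := by
  have hw : 0 ≤ -log v := neg_nonneg.2 (log_nonpos hv0.le hv1.le)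
  have huv : 0 < u - v := by linarith
  have hd : 0 < u ^ 2 - v ^ 2 := by nlinarith
  have hd' : 0 < 1 - v ^ 2 := by nlinarith
  have hu2 : 0 ≤ u ^ 2 - 1 := by nlinarith
  have hden : (u - v) * (1 - v) ≤ (u ^ 2 - v ^ 2) * (1 - v ^ 2) :=
    mul_le_mul (by nlinarith) (by nlinarith) (by linarith) hd.le
  have hsplit : -log (u * v) / (u ^ 2 - v ^ 2) - -log v / (1 - v ^ 2)
      = -(log u / (u ^ 2 - v ^ 2) + (u ^ 2 - 1) * (-log v / ((u ^ 2 - v ^ 2) * (1 - v ^ 2)))) := by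
    rw [log_mul (by positivity) hv0.ne']
    field_simp
    ring
  have hfirst : log u / (u ^ 2 - v ^ 2) ≤ (u - 1) * (u - v)⁻¹ :=
    div_le_div₀ (by linarith) (log_le_sub_one_of_pos (by linarith)) huv (by nlinarith)
  have hsecond : -log v / ((u ^ 2 - v ^ 2) * (1 - v ^ 2)) ≤ (u - v)⁻¹ + (1 + -log v) :=
    calc -log v / ((u ^ 2 - v ^ 2) * (1 - v ^ 2))
        ≤ -log v / ((u - v) * (1 - v)) :=
          div_le_div_of_nonneg_left hw (mul_pos huv (by linarith)) hden
      _ = (u - v)⁻¹ * (-log v / (1 - v)) := by field_simp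
      _ ≤ (u - v)⁻¹ * (1 + -log v) :=
          mul_le_mul_of_nonneg_left (neg_log_div_one_sub_le hv0 hv1) (by positivity)
      _ = (u - v)⁻¹ + -log v / (u - v) := by field_simp
      _ ≤ (u - v)⁻¹ + -log v / (1 - v) := by gcongr
      _ ≤ (u - v)⁻¹ + (1 + -log v) := by grw [neg_log_div_one_sub_le hv0 hv1]
  rw [hsplit, abs_neg, abs_of_nonneg (by have := log_nonneg hu.le; positivity)]
  gcongr

theorem abs_Jfun_integrand_sub_div_sq_le {u v : ℝ} (hu : 1 < u) (hv0 : 0 < v) (hv1 : v < 1) :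
    |-log (u * v) / (u ^ 2 - v ^ 2) - (-log u + -log v) / u ^ 2|
      ≤ (log u + -log v) / (u ^ 2 * (u ^ 2 - 1)) := by
  have hd : 0 < u ^ 2 - v ^ 2 := by nlinarith
  have hsplit : -log (u * v) / (u ^ 2 - v ^ 2) - (-log u + -log v) / u ^ 2
      = -log (u * v) * (v ^ 2 / (u ^ 2 * (u ^ 2 - v ^ 2))) := by
    rw [log_mul (by positivity) hv0.ne']
    field_simp
    ring
  have hu2 : 0 < u ^ 2 - 1 := by nlinarith
  have hfactor : v ^ 2 / (u ^ 2 * (u ^ 2 - v ^ 2)) ≤ 1 / (u ^ 2 * (u ^ 2 - 1)) :=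
    div_le_div₀ zero_le_one (by nlinarith) (by positivity)
      (mul_le_mul_of_nonneg_left (by nlinarith) (sq_nonneg u))
  rw [hsplit, abs_mul, abs_neg, abs_of_nonneg (by positivity : 0 ≤ v ^ 2 / (u ^ 2 * (u ^ 2 - v ^ 2))),
    div_eq_mul_one_div (log u + -log v)]
  exact mul_le_mul (abs_log_mul_le hu.le hv0 hv1.le) hfactor (by positivity)
    (by linarith [log_nonneg hu.le, log_nonpos hv0.le hv1.le])

theorem abs_Jfun_sub_pi_sq_div_eight_le {u : ℝ} (hu : 1 < u) :
    |Jfun u - π ^ 2 / 8|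
      ≤ (u - 1) * (log u - log (u - 1)) + (u ^ 2 - 1) * (log u - log (u - 1) + 2) := by
  have hinv := integrableOn_inv_sub hu
  have hsecond : IntegrableOn (fun v => (u ^ 2 - 1) * ((u - v)⁻¹ + (1 + -log v))) (Ioo (0 : ℝ) 1) :=
    (hinv.add (integrableOn_const_add_neg_log 1)).const_mul _
  have hbound : IntegrableOn
      (fun v => (u - 1) * (u - v)⁻¹ + (u ^ 2 - 1) * ((u - v)⁻¹ + (1 + -log v))) (Ioo (0 : ℝ) 1) :=
    (hinv.const_mul _).add hsecond
  rw [Jfun, ← integral_neg_log_div_one_sub_sq]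
  refine (abs_integral_sub_integral_le (integrableOn_Jfun_integrand hu)
    integrableOn_neg_log_div_one_sub_sq hbound
    (ae_restrict_of_forall_mem measurableSet_Ioo
      fun v hv => abs_Jfun_integrand_sub_at_one_le hu hv.1 hv.2)).trans_eq ?_
  rw [integral_add (hinv.const_mul _) hsecond, integral_const_mul, integral_const_mul,
    integral_add hinv (integrableOn_const_add_neg_log 1), integral_inv_sub hu,
    integral_const_add_neg_log]
  ring

theorem abs_Jfun_sub_pi_sq_div_eight_le_mul_abs_log {u : ℝ} (hu1 : 1 < u) (hu2 : u ≤ 5 / 4) :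
    |Jfun u - π ^ 2 / 8| ≤ 11 * (u - 1) * |log (u - 1)| := by
  refine (abs_Jfun_sub_pi_sq_div_eight_le hu1).trans ?_
  set ε := u - 1
  set L := -log ε
  have hε : 0 < ε := sub_pos.2 hu1
  have hlogu' : log u ≤ ε := log_le_sub_one_of_pos (by linarith)
  have hL : 3 / 4 ≤ L := by linarith [log_le_sub_one_of_pos hε]
  have key : (log u + L) + (ε + 2) * (log u + L + 2) ≤ 11 * L := by nlinarith
  rw [abs_of_neg (by linarith : log ε < 0)]
  calc ε * (log u - log ε) + (u ^ 2 - 1) * (log u - log ε + 2)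
      = ε * ((log u + L) + (ε + 2) * (log u + L + 2)) := by ring
    _ ≤ ε * (11 * L) := mul_le_mul_of_nonneg_left key hε.le
    _ = 11 * ε * -log ε := by ring

theorem abs_Jfun_sub_one_sub_log_div_sq_le {u : ℝ} (hu : 1 < u) :
    |Jfun u - (1 - log u) / u ^ 2| ≤ (1 + log u) / (u ^ 2 * (u ^ 2 - 1)) := by
  have hmain : ∫ v in Ioo (0 : ℝ) 1, (-log u + -log v) / u ^ 2 = (1 - log u) / u ^ 2 := by
    rw [integral_div, integral_const_add_neg_log]
    ring
  rw [Jfun, ← hmain]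
  refine (abs_integral_sub_integral_le (integrableOn_Jfun_integrand hu)
    ((integrableOn_const_add_neg_log _).div_const _)
    ((integrableOn_const_add_neg_log _).div_const _) (ae_restrict_of_forall_mem measurableSet_Ioo
      fun v hv => abs_Jfun_integrand_sub_div_sq_le hu hv.1 hv.2)).trans_eq ?_
  rw [integral_div, integral_const_add_neg_log, add_comm]

theorem abs_Jfun_sub_one_sub_log_div_sq_le_of_two_le {u : ℝ} (hu : 2 ≤ u) :
    |Jfun u - (1 - log u) / u ^ 2| ≤ 2 * (1 + log u) / u ^ 4 := by
  refine (abs_Jfun_sub_one_sub_log_div_sq_le (by linarith)).trans ?_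
  have hlog : 0 ≤ 1 + log u := by linarith [log_nonneg (by linarith : (1 : ℝ) ≤ u)]
  have hu2 : 0 ≤ u ^ 2 * (u ^ 2 - 2) := mul_nonneg (sq_nonneg u) (by nlinarith)
  rw [div_le_div_iff₀ (by nlinarith) (by positivity)]
  nlinarith [mul_nonneg hlog hu2]

end SOSEX

/-- Endpoint asymptotics of `J(u)`:
`J(u) = π²/8 + O((u-1)|log(u-1)|)` as `u → 1⁺` and
`J(u) = (1-log u)/u² + O((1+log u)/u⁴)` as `u → ∞`. -/
theorem stmt16 :
    (∃ C : ℝ, 0 < C ∧ ∃ η₀ : ℝ, 0 < η₀ ∧ η₀ < 1 / 2 ∧ ∀ u : ℝ, 1 < u → u ≤ 1 + η₀ →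
      |SOSEX.Jfun u - Real.pi ^ 2 / 8| ≤ C * (u - 1) * |Real.log (u - 1)|) ∧
    (∃ C' : ℝ, 0 < C' ∧ ∃ U : ℝ, 2 ≤ U ∧ ∀ u : ℝ, U ≤ u →
      |SOSEX.Jfun u - (1 - Real.log u) / u ^ 2| ≤ C' * (1 + Real.log u) / u ^ 4) :=
  ⟨⟨11, by norm_num, 1 / 4, by norm_num, by norm_num, fun _ hu1 hu2 =>
      SOSEX.abs_Jfun_sub_pi_sq_div_eight_le_mul_abs_log hu1 (by linarith)⟩,
    ⟨2, by norm_num, 2, le_rfl, fun _ hu =>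
      SOSEX.abs_Jfun_sub_one_sub_log_div_sq_le_of_two_le hu⟩⟩
end
end

section
/- Define C(v) = ∫₁^∞ L(u)·ℓ(u,v)/(u²-v²)² du for 0 < v < 1, c₀ = ∫₁^∞ L(u)/u⁴ du and d₀ = ∫₁^∞ L(u)·(-log u)/u⁴ du. Then the integrals defining c₀ and d₀ converge absolutely, and there exist C > 0 and v₀ ∈ (0,1/2] such that for all 0 < v ≤ v₀: |C(v) - c₀·log(1/v) - d₀| ≤ C·v²·log(1/v). -/
open MeasureTheory Set

noncomputable section

namespace SOSEX

/-- The `v`-channel remainder amplitude `C(v) = ∫₁^∞ L(u)·ℓ(u,v)/(u²-v²)² du`. -/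
def Cfun (v : ℝ) : ℝ := ∫ u in Ioi (1 : ℝ), Lfun u * ell u v / (u ^ 2 - v ^ 2) ^ 2


lemma Lfun_nonneg {u : ℝ} (hu : 1 < u) : 0 ≤ Lfun u := by
  apply Real.log_nonneg
  rw [le_div_iff₀ (by linarith)]; linarith

lemma Lfun_le_near {u : ℝ} (hu : 1 < u) (hu2 : u ≤ 2) :
    Lfun u ≤ Real.log 3 - Real.log (u - 1) := by
  unfold Lfun
  rw [Real.log_div (by linarith) (by linarith)]
  have : Real.log (u+1) ≤ Real.log 3 := Real.log_le_log (by linarith) (by linarith)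
  linarith

lemma Lfun_le_far {u : ℝ} (hu : 2 ≤ u) : Lfun u ≤ 4 / u := by
  have h1 : (0:ℝ) < u - 1 := by linarith
  have : Lfun u ≤ (u+1)/(u-1) - 1 :=
    Real.log_le_sub_one_of_pos (by positivity)
  have h2 : (u+1)/(u-1) - 1 = 2/(u-1) := by field_simp; ring
  have h3 : 2/(u-1) ≤ 4/u := by
    rw [div_le_div_iff₀ h1 (by linarith)]; nlinarith
  linarith [this, h2 ▸ this]

lemma neg_log_le {x : ℝ} (hx : 0 < x) : -Real.log x ≤ 2 * x ^ (-(1/2) : ℝ) := by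
  have hy : (0:ℝ) < x ^ (-(1/2) : ℝ) := Real.rpow_pos_of_pos hx _
  have := Real.log_le_sub_one_of_pos hy
  rw [Real.log_rpow hx] at this
  nlinarith

lemma measurable_Lfun : Measurable Lfun := by
  exact Real.measurable_log.comp ((measurable_id.add_const 1).div (measurable_id.sub_const 1))

end SOSEX

namespace SOSEX

/-- master majorant -/
noncomputable def hmaj (u : ℝ) : ℝ := Lfun u * (1 + Real.log u) / u ^ 4

lemma measurable_hmaj : Measurable hmaj :=
  ((measurable_Lfun.mul ((measurable_const.add Real.measurable_log))).div
    (measurable_id.pow_const 4))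

lemma integrable_shift_rpow :
    IntegrableOn (fun u : ℝ => (u - 1) ^ (-(1/2) : ℝ)) (Ioc 1 2) := by
  have h0 : IntervalIntegrable (fun x : ℝ => x ^ (-(1/2) : ℝ)) volume 0 1 :=
    intervalIntegral.intervalIntegrable_rpow' (by norm_num)
  have h1 := h0.comp_sub_right 1
  rw [intervalIntegrable_iff_integrableOn_Ioc_of_le (by norm_num)] at h1
  have : (0:ℝ)+1 = 1 ∧ (1:ℝ)+1 = 2 := by norm_num
  rw [this.1, this.2] at h1
  exact h1

lemma hmaj_integrable : IntegrableOn hmaj (Ioi 1) := by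
  have hsplit : Ioi (1:ℝ) = Ioc 1 2 ∪ Ioi 2 := (Ioc_union_Ioi_eq_Ioi (by norm_num)).symm
  rw [hsplit]
  apply IntegrableOn.union
  · -- near part
    have hmaj_int : IntegrableOn
        (fun u : ℝ => (1 + Real.log 2) * (Real.log 3 + 2 * (u - 1) ^ (-(1/2) : ℝ)))
        (Ioc 1 2) := by
      apply Integrable.const_mul
      exact (integrable_const _).add (integrable_shift_rpow.const_mul 2)
    refine Integrable.mono' hmaj_int (measurable_hmaj.aestronglyMeasurable) ?_
    filter_upwards [ae_restrict_mem measurableSet_Ioc] with u hu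
    obtain ⟨hu1, hu2⟩ := hu
    have hL0 := Lfun_nonneg hu1
    have hlog0 : 0 ≤ Real.log u := Real.log_nonneg (by linarith)
    have hlog2 : Real.log u ≤ Real.log 2 := Real.log_le_log (by linarith) hu2
    have hu4 : (1:ℝ) ≤ u ^ 4 := one_le_pow₀ (by linarith)
    have hLle : Lfun u ≤ Real.log 3 - Real.log (u - 1) := Lfun_le_near hu1 hu2
    have hneg : -Real.log (u - 1) ≤ 2 * (u - 1) ^ (-(1/2) : ℝ) := neg_log_le (by linarith)
    have hLle' : Lfun u ≤ Real.log 3 + 2 * (u - 1) ^ (-(1/2) : ℝ) := by linarith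
    have hR0 : 0 ≤ Real.log 3 + 2 * (u - 1) ^ (-(1/2) : ℝ) := le_trans hL0 hLle'
    show ‖Lfun u * (1 + Real.log u) / u ^ 4‖ ≤ _
    rw [Real.norm_eq_abs, abs_of_nonneg (by positivity)]
    rw [div_le_iff₀ (by positivity)]
    calc Lfun u * (1 + Real.log u)
        ≤ (Real.log 3 + 2 * (u - 1) ^ (-(1/2) : ℝ)) * (1 + Real.log 2) := by
          apply mul_le_mul hLle' (by linarith) (by linarith) hR0
      _ ≤ (1 + Real.log 2) * (Real.log 3 + 2 * (u - 1) ^ (-(1/2) : ℝ)) * u ^ 4 := by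
          nlinarith [mul_nonneg (mul_nonneg (by linarith [Real.log_nonneg (show (1:ℝ) ≤ 2 by norm_num)] : (0:ℝ) ≤ 1 + Real.log 2) hR0) (sub_nonneg.mpr hu4)]
  · -- far part
    have hmaj_int : IntegrableOn (fun u : ℝ => 8 * u ^ (-4 : ℝ)) (Ioi 2) :=
      (integrableOn_Ioi_rpow_of_lt (by norm_num) (by norm_num)).const_mul 8
    refine Integrable.mono' hmaj_int (measurable_hmaj.aestronglyMeasurable) ?_
    filter_upwards [ae_restrict_mem measurableSet_Ioi] with u hu
    have hu2 : (2:ℝ) < u := hu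
    have hu0 : (0:ℝ) < u := by linarith
    have hL0 := Lfun_nonneg (by linarith : (1:ℝ) < u)
    have hLle : Lfun u ≤ 4 / u := Lfun_le_far hu2.le
    have hlog0 : 0 ≤ Real.log u := Real.log_nonneg (by linarith)
    have hlogu : Real.log u ≤ u - 1 := by
      have := Real.log_le_sub_one_of_pos hu0; linarith
    have hrw : u ^ (-4 : ℝ) = (u ^ 4)⁻¹ := by
      rw [show (-4:ℝ) = -(4:ℕ) by norm_num, Real.rpow_neg hu0.le, Real.rpow_natCast]
    show ‖Lfun u * (1 + Real.log u) / u ^ 4‖ ≤ _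
    rw [Real.norm_eq_abs, abs_of_nonneg (by positivity), hrw]
    rw [div_le_iff₀ (by positivity), mul_assoc, inv_mul_cancel₀ (by positivity), mul_one]
    calc Lfun u * (1 + Real.log u) ≤ (4 / u) * (2 * u) := by
          apply mul_le_mul hLle (by linarith) (by linarith) (by positivity)
      _ = 8 := by field_simp; ring

lemma ker {u v : ℝ} (hu : 1 < u) (hv : 0 < v) (hv2 : v ≤ 1/2) :
    (0:ℝ) < u^2 - v^2 ∧ ((u^2 - v^2)^2)⁻¹ ≤ (16/9) / u^4 ∧
    0 ≤ ((u^2 - v^2)^2)⁻¹ - (u^4)⁻¹ ∧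
    ((u^2 - v^2)^2)⁻¹ - (u^4)⁻¹ ≤ (32/9) * v^2 / u^4 := by
  have ha : 1 < u^2 := by nlinarith
  have hb : 0 < v^2 := by positivity
  have hb4 : v^2 ≤ 1/4 := by nlinarith
  have hx : 0 < u^2 - v^2 := by nlinarith
  have h9 : (9/16) * u^4 ≤ (u^2 - v^2)^2 := by nlinarith
  have hle : (u^2 - v^2)^2 ≤ u^4 := by nlinarith
  have hu4 : (0:ℝ) < u^4 := by positivity
  refine ⟨hx, ?_, ?_, ?_⟩
  · have h1 : ((u^2 - v^2)^2)⁻¹ ≤ ((9/16) * u^4)⁻¹ :=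
      inv_anti₀ (by positivity) h9
    have h2 : ((9/16) * u^4 : ℝ)⁻¹ = (16/9) / u^4 := by
      field_simp
    linarith [h2 ▸ h1]
  · have : (u^4)⁻¹ ≤ ((u^2 - v^2)^2)⁻¹ := inv_anti₀ (by positivity) hle
    linarith
  · have e : ((u^2 - v^2)^2)⁻¹ - (u^4)⁻¹
        = (u^4 - (u^2 - v^2)^2) / ((u^2 - v^2)^2 * u^4) := by
      field_simp
    have core : u^4 - (u^2 - v^2)^2 ≤ (32/9) * v^2 * (u^2 - v^2)^2 := by
      nlinarith [mul_le_mul_of_nonneg_left h9 hb.le, sq_nonneg (u^2 - v^2), sq_nonneg v,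
        mul_nonneg hb.le (sub_nonneg.mpr ha.le)]
    rw [e, div_le_div_iff₀ (by positivity) hu4]
    nlinarith [mul_le_mul_of_nonneg_right core hu4.le]

lemma gen_bound {u w k c : ℝ} (hu : 1 < u) (hw : |w| ≤ 1 + Real.log u)
    (hk : |k| ≤ c / u^4) : ‖Lfun u * w * k‖ ≤ c * hmaj u := by
  have hL := Lfun_nonneg hu
  have hu4 : (0:ℝ) < u^4 := by positivity
  have hlog : 0 ≤ Real.log u := Real.log_nonneg hu.le
  have hc : 0 ≤ c := by
    rcases div_nonneg_iff.mp (le_trans (abs_nonneg k) hk) with h | h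
    · exact h.1
    · linarith [h.2]
  rw [Real.norm_eq_abs, abs_mul, abs_mul, abs_of_nonneg hL]
  calc Lfun u * |w| * |k| ≤ Lfun u * (1 + Real.log u) * (c / u^4) := by
        apply mul_le_mul (mul_le_mul_of_nonneg_left hw hL) hk (abs_nonneg k) (by positivity)
    _ = c * hmaj u := by unfold hmaj; ring

end SOSEX


open SOSEX

/-- Small-`v` expansion of the `v`-channel remainder amplitude:
with `c₀ = ∫₁^∞ L(u)/u⁴ du` and `d₀ = ∫₁^∞ L(u)(-log u)/u⁴ du` (both absolutely
convergent), `C(v) = c₀·log(1/v) + d₀ + O(v²·log(1/v))` as `v → 0⁺`. -/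
theorem stmt17 :
    IntegrableOn (fun u : ℝ => SOSEX.Lfun u / u ^ 4) (Ioi 1) volume ∧
    IntegrableOn (fun u : ℝ => SOSEX.Lfun u * (-Real.log u) / u ^ 4) (Ioi 1) volume ∧
    ∃ C : ℝ, 0 < C ∧ ∃ v₀ : ℝ, 0 < v₀ ∧ v₀ ≤ 1 / 2 ∧ ∀ v : ℝ, 0 < v → v ≤ v₀ →
      |SOSEX.Cfun v - (∫ u in Ioi (1 : ℝ), SOSEX.Lfun u / u ^ 4) * Real.log (1 / v) -
          (∫ u in Ioi (1 : ℝ), SOSEX.Lfun u * (-Real.log u) / u ^ 4)|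
        ≤ C * v ^ 2 * Real.log (1 / v) := by
  have hmes2 : AEStronglyMeasurable (fun u : ℝ => Lfun u / u ^ 4) (volume.restrict (Ioi 1)) :=
    (measurable_Lfun.div (measurable_id.pow_const 4)).aestronglyMeasurable
  have hmes1 : AEStronglyMeasurable (fun u : ℝ => Lfun u * (-Real.log u) / u ^ 4)
      (volume.restrict (Ioi 1)) :=
    ((measurable_Lfun.mul Real.measurable_log.neg).div (measurable_id.pow_const 4)).aestronglyMeasurable
  -- pointwise bounds for the v-free integrands
  have hb2 : ∀ u ∈ Ioi (1:ℝ), ‖Lfun u / u ^ 4‖ ≤ hmaj u := by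
    intro u hu
    have hu1 : (1:ℝ) < u := hu
    have := gen_bound (w := 1) (k := (u^4)⁻¹) (c := 1) hu1
      (by rw [abs_one]; linarith [Real.log_nonneg hu1.le])
      (by rw [abs_of_nonneg (by positivity), one_div])
    simpa [div_eq_mul_inv] using this
  have hb1 : ∀ u ∈ Ioi (1:ℝ), ‖Lfun u * (-Real.log u) / u ^ 4‖ ≤ hmaj u := by
    intro u hu
    have hu1 : (1:ℝ) < u := hu
    have hlog := Real.log_nonneg hu1.le
    have := gen_bound (w := -Real.log u) (k := (u^4)⁻¹) (c := 1) hu1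
      (by rw [abs_neg, abs_of_nonneg hlog]; linarith)
      (by rw [abs_of_nonneg (by positivity), one_div])
    simpa [div_eq_mul_inv] using this
  have int_g2 : IntegrableOn (fun u : ℝ => Lfun u / u ^ 4) (Ioi 1) volume := by
    refine Integrable.mono' hmaj_integrable hmes2 ?_
    filter_upwards [ae_restrict_mem measurableSet_Ioi] with u hu using hb2 u hu
  have int_g1 : IntegrableOn (fun u : ℝ => Lfun u * (-Real.log u) / u ^ 4) (Ioi 1) volume := by
    refine Integrable.mono' hmaj_integrable hmes1 ?_
    filter_upwards [ae_restrict_mem measurableSet_Ioi] with u hu using hb1 u hu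
  refine ⟨int_g2, int_g1, ?_⟩
  set K : ℝ := ∫ u in Ioi (1:ℝ), hmaj u with hK
  have hK0 : 0 ≤ K := by
    apply setIntegral_nonneg measurableSet_Ioi
    intro u hu
    have hu1 : (1:ℝ) < u := hu
    have := Lfun_nonneg hu1
    have := Real.log_nonneg hu1.le
    unfold hmaj; positivity
  refine ⟨(32/9) * K * 3 + 1, by positivity, 1/2, by norm_num, le_refl _, ?_⟩
  intro v hv hv2
  -- log facts
  have hlv : Real.log 2 ≤ Real.log (1/v) := by
    apply Real.log_le_log (by norm_num)
    rw [le_div_iff₀ hv]; linarith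
  have hlog2 : (0.6931471803 : ℝ) < Real.log 2 := Real.log_two_gt_d9
  have hlv0 : 0 < Real.log (1/v) := by linarith
  have hlv1 : 1 ≤ 2 * Real.log (1/v) := by linarith
  -- integrands depending on v
  set f1 : ℝ → ℝ := fun u => Lfun u * (-Real.log u) / (u^2 - v^2)^2 with hf1
  set f2 : ℝ → ℝ := fun u => Lfun u / (u^2 - v^2)^2 with hf2
  have hmesf2 : AEStronglyMeasurable f2 (volume.restrict (Ioi 1)) :=
    (measurable_Lfun.div (((measurable_id.pow_const 2).sub_const (v^2)).pow_const 2)).aestronglyMeasurable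
  have hmesf1 : AEStronglyMeasurable f1 (volume.restrict (Ioi 1)) :=
    ((measurable_Lfun.mul Real.measurable_log.neg).div
      (((measurable_id.pow_const 2).sub_const (v^2)).pow_const 2)).aestronglyMeasurable
  have hbf2 : ∀ u ∈ Ioi (1:ℝ), ‖f2 u‖ ≤ (16/9) * hmaj u := by
    intro u hu
    have hu1 : (1:ℝ) < u := hu
    obtain ⟨hx, hk1, _, _⟩ := ker hu1 hv hv2
    have := gen_bound (w := 1) (k := ((u^2 - v^2)^2)⁻¹) (c := 16/9) hu1
      (by rw [abs_one]; linarith [Real.log_nonneg hu1.le])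
      (by rwa [abs_of_nonneg (by positivity)])
    simpa [hf2, div_eq_mul_inv] using this
  have hbf1 : ∀ u ∈ Ioi (1:ℝ), ‖f1 u‖ ≤ (16/9) * hmaj u := by
    intro u hu
    have hu1 : (1:ℝ) < u := hu
    have hlog := Real.log_nonneg hu1.le
    obtain ⟨hx, hk1, _, _⟩ := ker hu1 hv hv2
    have := gen_bound (w := -Real.log u) (k := ((u^2 - v^2)^2)⁻¹) (c := 16/9) hu1
      (by rw [abs_neg, abs_of_nonneg hlog]; linarith)
      (by rwa [abs_of_nonneg (by positivity)])
    simpa [hf1, div_eq_mul_inv] using this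
  have int_f2 : IntegrableOn f2 (Ioi 1) volume := by
    refine Integrable.mono' (hmaj_integrable.const_mul (16/9)) hmesf2 ?_
    filter_upwards [ae_restrict_mem measurableSet_Ioi] with u hu using hbf2 u hu
  have int_f1 : IntegrableOn f1 (Ioi 1) volume := by
    refine Integrable.mono' (hmaj_integrable.const_mul (16/9)) hmesf1 ?_
    filter_upwards [ae_restrict_mem measurableSet_Ioi] with u hu using hbf1 u hu
  -- difference bounds
  have hbd2 : ∀ u ∈ Ioi (1:ℝ), ‖f2 u - Lfun u / u ^ 4‖ ≤ (32/9) * v^2 * hmaj u := by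
    intro u hu
    have hu1 : (1:ℝ) < u := hu
    obtain ⟨hx, _, hk0, hk2⟩ := ker hu1 hv hv2
    have := gen_bound (w := 1) (k := ((u^2 - v^2)^2)⁻¹ - (u^4)⁻¹) (c := (32/9) * v^2) hu1
      (by rw [abs_one]; linarith [Real.log_nonneg hu1.le])
      (by rwa [abs_of_nonneg hk0])
    have he : f2 u - Lfun u / u ^ 4 = Lfun u * 1 * (((u^2 - v^2)^2)⁻¹ - (u^4)⁻¹) := by
      simp only [hf2]; ring
    rw [he]; exact this
  have hbd1 : ∀ u ∈ Ioi (1:ℝ),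
      ‖f1 u - Lfun u * (-Real.log u) / u ^ 4‖ ≤ (32/9) * v^2 * hmaj u := by
    intro u hu
    have hu1 : (1:ℝ) < u := hu
    have hlog := Real.log_nonneg hu1.le
    obtain ⟨hx, _, hk0, hk2⟩ := ker hu1 hv hv2
    have := gen_bound (w := -Real.log u) (k := ((u^2 - v^2)^2)⁻¹ - (u^4)⁻¹)
      (c := (32/9) * v^2) hu1
      (by rw [abs_neg, abs_of_nonneg hlog]; linarith)
      (by rwa [abs_of_nonneg hk0])
    have he : f1 u - Lfun u * (-Real.log u) / u ^ 4
        = Lfun u * (-Real.log u) * (((u^2 - v^2)^2)⁻¹ - (u^4)⁻¹) := by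
      simp only [hf1]; ring
    rw [he]; exact this
  -- decomposition of Cfun
  have hCv : Cfun v = (∫ u in Ioi (1:ℝ), f1 u)
      + Real.log (1/v) * ∫ u in Ioi (1:ℝ), f2 u := by
    have hEq : EqOn (fun u : ℝ => Lfun u * ell u v / (u ^ 2 - v ^ 2) ^ 2)
        (fun u : ℝ => f1 u + Real.log (1/v) * f2 u) (Ioi 1) := by
      intro u hu
      have hu1 : (1:ℝ) < u := hu
      simp only [hf1, hf2, ell]
      rw [Real.log_mul (by linarith) (ne_of_gt hv), one_div, Real.log_inv]
      ring
    rw [Cfun, setIntegral_congr_fun measurableSet_Ioi hEq,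
      integral_add int_f1 (int_f2.const_mul _), integral_const_mul]
  -- integral difference bounds
  have hnb1 : ‖(∫ u in Ioi (1:ℝ), f1 u) - ∫ u in Ioi (1:ℝ), Lfun u * (-Real.log u) / u ^ 4‖
      ≤ (32/9) * v^2 * K := by
    rw [← integral_sub int_f1 int_g1]
    have : ∫ u in Ioi (1:ℝ), (32/9) * v^2 * hmaj u = (32/9) * v^2 * K :=
      integral_const_mul _ _
    rw [← this]
    refine norm_integral_le_of_norm_le ((hmaj_integrable.const_mul _)) ?_
    filter_upwards [ae_restrict_mem measurableSet_Ioi] with u hu using hbd1 u hu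
  have hnb2 : ‖(∫ u in Ioi (1:ℝ), f2 u) - ∫ u in Ioi (1:ℝ), Lfun u / u ^ 4‖
      ≤ (32/9) * v^2 * K := by
    rw [← integral_sub int_f2 int_g2]
    have : ∫ u in Ioi (1:ℝ), (32/9) * v^2 * hmaj u = (32/9) * v^2 * K :=
      integral_const_mul _ _
    rw [← this]
    refine norm_integral_le_of_norm_le ((hmaj_integrable.const_mul _)) ?_
    filter_upwards [ae_restrict_mem measurableSet_Ioi] with u hu using hbd2 u hu
  -- assemble
  rw [Real.norm_eq_abs] at hnb1 hnb2
  have key : Cfun v - (∫ u in Ioi (1 : ℝ), Lfun u / u ^ 4) * Real.log (1 / v) -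
      (∫ u in Ioi (1 : ℝ), Lfun u * (-Real.log u) / u ^ 4)
      = ((∫ u in Ioi (1:ℝ), f1 u) - ∫ u in Ioi (1:ℝ), Lfun u * (-Real.log u) / u ^ 4)
        + Real.log (1/v) * ((∫ u in Ioi (1:ℝ), f2 u) - ∫ u in Ioi (1:ℝ), Lfun u / u ^ 4) := by
    rw [hCv]; ring
  rw [key]
  calc |((∫ u in Ioi (1:ℝ), f1 u) - ∫ u in Ioi (1:ℝ), Lfun u * (-Real.log u) / u ^ 4)
        + Real.log (1/v) * ((∫ u in Ioi (1:ℝ), f2 u) - ∫ u in Ioi (1:ℝ), Lfun u / u ^ 4)|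
      ≤ (32/9) * v^2 * K + Real.log (1/v) * ((32/9) * v^2 * K) := by
        refine (abs_add_le _ _).trans ?_
        gcongr
        rw [abs_mul, abs_of_nonneg hlv0.le]
        exact mul_le_mul_of_nonneg_left hnb2 hlv0.le
    _ ≤ ((32/9) * K * 3 + 1) * v^2 * Real.log (1/v) := by
        have h1 : (32/9) * v^2 * K ≤ (32/9) * v^2 * K * (2 * Real.log (1/v)) := by
          nlinarith [mul_nonneg (mul_nonneg (by norm_num : (0:ℝ) ≤ 32/9) (sq_nonneg v)) hK0]
        nlinarith [mul_nonneg (mul_nonneg (by norm_num : (0:ℝ) ≤ 32/9) (sq_nonneg v)) hK0,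
          mul_nonneg (sq_nonneg v) hlv0.le]
end
end
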